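/- arXiv:math/0612231 — 3 statements merged into one kernel-verified Lean document; each statement's English description precedes it below -/
import Mathlib

section
/- The non-degenerate Hermitian surface X : x_0^{t+1} + x_1^{t+1} + x_2^{t+1} + x_3^{t+1} = 0 in PG(3, t^2) has exactly (t^2+1)(t^3+1) rational points over F_{t^2}. -/
open LinearAlgebra.Projectivization Projectivization Finset


section Herm
open Polynomial
variable {t : ℕ} {F : Type} [Field F] [Fintype F] [DecidableEq F]

/-- the subfield (as a finset) of elements fixed by `x ↦ x^t` -/
def Kset (t : ℕ) (F : Type) [Field F] [Fintype F] [DecidableEq F] : Finset F :=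
  univ.filter fun y => y ^ t = y

lemma mem_Kset {y : F} : y ∈ Kset t F ↔ y ^ t = y := by simp [Kset]

lemma herm_pow_card (hF : Fintype.card F = t ^ 2) (x : F) : x ^ t ^ 2 = x := by
  rw [← hF]; exact FiniteField.pow_card x

lemma herm_f_mem (hF : Fintype.card F = t ^ 2) (x : F) : x ^ (t + 1) ∈ Kset t F := by
  rw [mem_Kset, ← pow_mul]
  have h : (t + 1) * t = t ^ 2 + t := by ring
  rw [h, pow_add, herm_pow_card hF, ← pow_succ']

set_option linter.unusedSectionVars false

lemma herm_add_pow (ht : IsPrimePow t) (hF : Fintype.card F = t ^ 2) (x y : F) :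
    (x + y) ^ t = x ^ t + y ^ t := by
  obtain ⟨p, k, hp, hk, rfl⟩ := ht
  have hp' : Nat.Prime p := Nat.prime_iff.mpr hp
  haveI : Fact (Nat.Prime p) := ⟨hp'⟩
  obtain ⟨p', hc⟩ := CharP.exists F
  haveI := hc
  obtain ⟨n, hp'', hcard⟩ := FiniteField.card F p'
  have hpp' : p = p' := by
    have : p ∣ p' ^ (n : ℕ) := by
      rw [← hcard, hF]
      exact dvd_pow (dvd_pow_self p hk.ne') two_ne_zero
    exact ((Nat.prime_dvd_prime_iff_eq hp' hp'').mp (hp'.dvd_of_dvd_pow this))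
  subst hpp'
  exact add_pow_char_pow x y p k

lemma herm_neg_pow (ht : IsPrimePow t) (hF : Fintype.card F = t ^ 2) (x : F) :
    (-x) ^ t = -(x ^ t) := by
  have h := herm_add_pow ht hF (-x) x
  simp only [neg_add_cancel] at h
  have ht0 : t ≠ 0 := ht.pos.ne'
  rw [zero_pow ht0] at h
  exact eq_neg_of_add_eq_zero_left h.symm

lemma Kset_add {x y : F} (ht : IsPrimePow t) (hF : Fintype.card F = t ^ 2)
    (hx : x ∈ Kset t F) (hy : y ∈ Kset t F) : x + y ∈ Kset t F := by
  rw [mem_Kset] at *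
  rw [herm_add_pow ht hF, hx, hy]

lemma Kset_neg {x : F} (ht : IsPrimePow t) (hF : Fintype.card F = t ^ 2)
    (hx : x ∈ Kset t F) : -x ∈ Kset t F := by
  rw [mem_Kset] at *
  rw [herm_neg_pow ht hF, hx]

lemma Kset_sub {x y : F} (ht : IsPrimePow t) (hF : Fintype.card F = t ^ 2)
    (hx : x ∈ Kset t F) (hy : y ∈ Kset t F) : x - y ∈ Kset t F := by
  rw [sub_eq_add_neg]; exact Kset_add ht hF hx (Kset_neg ht hF hy)

lemma Kset_zero : (0 : F) ∈ Kset t F ∨ t = 0 := by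
  rcases Nat.eq_zero_or_pos t with h | h
  · exact Or.inr h
  · exact Or.inl (by rw [mem_Kset]; exact zero_pow h.ne')

lemma Kset_mul {x y : F} (hx : x ∈ Kset t F) (hy : y ∈ Kset t F) : x * y ∈ Kset t F := by
  rw [mem_Kset] at *; rw [mul_pow, hx, hy]

lemma Kset_inv {x : F} (hx : x ∈ Kset t F) : x⁻¹ ∈ Kset t F := by
  rw [mem_Kset] at *; rw [inv_pow, hx]

lemma Kset_card_le (ht : IsPrimePow t) : (Kset t F).card ≤ t := by
  have h2 : 2 ≤ t := ht.two_le
  set P : F[X] := X ^ t - X with hP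
  have hdeg : P.natDegree = t := by
    rw [hP]
    have : (X : F[X]).natDegree < (X ^ t : F[X]).natDegree := by
      rw [natDegree_X, natDegree_X_pow]; omega
    rw [natDegree_sub_eq_left_of_natDegree_lt this, natDegree_X_pow]
  have hP0 : P ≠ 0 := by
    intro h
    rw [h] at hdeg
    simp at hdeg; omega
  have hsub : Kset t F ⊆ P.roots.toFinset := by
    intro y hy
    rw [mem_Kset] at hy
    rw [Multiset.mem_toFinset, mem_roots hP0]
    simp [hP, IsRoot.def, hy]
  calc (Kset t F).card ≤ P.roots.toFinset.card := Finset.card_le_card hsub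
    _ ≤ Multiset.card P.roots := Multiset.toFinset_card_le _
    _ ≤ P.natDegree := card_roots' P
    _ = t := hdeg

/-- number of `(t+1)`-th roots of `y` -/
def ccount (t : ℕ) {F : Type} [Field F] [Fintype F] [DecidableEq F] (y : F) : ℕ :=
  (univ.filter fun x : F => x ^ (t + 1) = y).card

lemma ccount_zero : ccount t (0 : F) = 1 := by
  rw [ccount]
  have : (univ.filter fun x : F => x ^ (t + 1) = 0) = {0} := by
    ext x; simp [pow_eq_zero_iff (Nat.succ_ne_zero t)]
  rw [this, card_singleton]

lemma ccount_le (y : F) : ccount t y ≤ t + 1 := by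
  have hsub : (univ.filter fun x : F => x ^ (t + 1) = y) ⊆
      (Polynomial.nthRoots (t + 1) y).toFinset := by
    intro x hx
    simp only [mem_filter] at hx
    rw [Multiset.mem_toFinset, Polynomial.mem_nthRoots (Nat.succ_pos t)]
    exact hx.2
  calc ccount t y ≤ (Polynomial.nthRoots (t + 1) y).toFinset.card :=
        Finset.card_le_card hsub
    _ ≤ Multiset.card (Polynomial.nthRoots (t + 1) y) := Multiset.toFinset_card_le _
    _ ≤ t + 1 := Polynomial.card_nthRoots _ _

lemma herm_partition (ht : IsPrimePow t) (hF : Fintype.card F = t ^ 2) :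
    ∑ y ∈ (Kset t F).erase 0, ccount t y = t ^ 2 - 1 := by
  have h2 : 2 ≤ t := ht.two_le
  have key : ((univ : Finset F).erase 0).card =
      ∑ y ∈ (Kset t F).erase 0, (((univ : Finset F).erase 0).filter
        fun x => x ^ (t + 1) = y).card := by
    apply Finset.card_eq_sum_card_fiberwise
    intro x hx
    rw [Finset.mem_coe, mem_erase] at hx
    rw [Finset.mem_coe, mem_erase]
    refine ⟨?_, herm_f_mem hF x⟩
    exact pow_ne_zero _ hx.1
  have hcards : ∀ y ∈ (Kset t F).erase 0,
      (((univ : Finset F).erase 0).filter fun x => x ^ (t + 1) = y).card = ccount t y := by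
    intro y hy
    rw [mem_erase] at hy
    congr 1
    ext x
    simp only [mem_filter, mem_erase, mem_univ, true_and, and_true, ccount]
    constructor
    · rintro ⟨_, h⟩; exact h
    · intro h
      refine ⟨?_, h⟩
      rintro rfl
      rw [zero_pow (Nat.succ_ne_zero t)] at h
      exact hy.1 h.symm
  rw [Finset.sum_congr rfl hcards] at key
  rw [← key, Finset.card_erase_of_mem (mem_univ 0), Finset.card_univ, hF]

lemma Kset_erase_card (ht : IsPrimePow t) (hF : Fintype.card F = t ^ 2) :
    ((Kset t F).erase 0).card = t - 1 := by
  have h2 : 2 ≤ t := ht.two_le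
  have hle : ((Kset t F).erase 0).card ≤ t - 1 := by
    have := Finset.card_erase_le (s := Kset t F) (a := (0:F))
    have := Kset_card_le (F := F) ht
    have h0 : (0:F) ∈ Kset t F := (Kset_zero).resolve_right (by omega)
    rw [Finset.card_erase_of_mem h0]
    omega
  have hsum := herm_partition (F := F) ht hF
  have hub : ∑ y ∈ (Kset t F).erase 0, ccount t y ≤ ((Kset t F).erase 0).card * (t + 1) := by
    calc ∑ y ∈ (Kset t F).erase 0, ccount t y ≤ ∑ _y ∈ (Kset t F).erase 0, (t + 1) :=
        Finset.sum_le_sum fun y _ => ccount_le y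
      _ = ((Kset t F).erase 0).card * (t + 1) := by rw [Finset.sum_const, smul_eq_mul]
  have : (t - 1) * (t + 1) ≤ ((Kset t F).erase 0).card * (t + 1) := by
    have h1 : (t - 1) * (t + 1) = t ^ 2 - 1 := by
      obtain ⟨u, rfl⟩ := Nat.exists_eq_add_of_le h2
      have e1 : (2 + u) - 1 = u + 1 := by omega
      have e2 : (2 + u) ^ 2 = u ^ 2 + 4 * u + 4 := by ring
      have e3 : (u + 1) * (2 + u + 1) = u ^ 2 + 4 * u + 3 := by ring
      rw [e1, e2, e3]; omega
    omega
  have := Nat.le_of_mul_le_mul_right this (by omega : 0 < t + 1)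
  omega

lemma Kset_card (ht : IsPrimePow t) (hF : Fintype.card F = t ^ 2) :
    (Kset t F).card = t := by
  have h2 : 2 ≤ t := ht.two_le
  have h0 : (0:F) ∈ Kset t F := (Kset_zero).resolve_right (by omega)
  have := Kset_erase_card (F := F) ht hF
  rw [Finset.card_erase_of_mem h0] at this
  have h1 : 1 ≤ (Kset t F).card := Finset.card_pos.mpr ⟨0, h0⟩
  omega

lemma ccount_eq (ht : IsPrimePow t) (hF : Fintype.card F = t ^ 2) {y : F}
    (hy : y ∈ (Kset t F).erase 0) : ccount t y = t + 1 := by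
  have h2 : 2 ≤ t := ht.two_le
  by_contra hne
  have hlt : ccount t y < t + 1 := lt_of_le_of_ne (ccount_le y) hne
  have hsum := herm_partition (F := F) ht hF
  have hcard := Kset_erase_card (F := F) ht hF
  have hstrict : ∑ z ∈ (Kset t F).erase 0, ccount t z <
      ∑ _z ∈ (Kset t F).erase 0, (t + 1) := by
    apply Finset.sum_lt_sum (fun z _ => ccount_le z) ⟨y, hy, hlt⟩
  rw [Finset.sum_const, smul_eq_mul, hcard] at hstrict
  have h1 : (t - 1) * (t + 1) = t ^ 2 - 1 := by
    obtain ⟨u, rfl⟩ := Nat.exists_eq_add_of_le h2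
    have e1 : (2 + u) - 1 = u + 1 := by omega
    have e2 : (2 + u) ^ 2 = u ^ 2 + 4 * u + 4 := by ring
    have e3 : (u + 1) * (2 + u + 1) = u ^ 2 + 4 * u + 3 := by ring
    rw [e1, e2, e3]; omega
  omega

lemma herm_surj (ht : IsPrimePow t) (hF : Fintype.card F = t ^ 2) {y : F}
    (hy : y ∈ Kset t F) : ∃ x : F, x ^ (t + 1) = y := by
  rcases eq_or_ne y 0 with rfl | hy0
  · exact ⟨0, zero_pow (Nat.succ_ne_zero t)⟩
  · have : ccount t y = t + 1 := ccount_eq ht hF (mem_erase.mpr ⟨hy0, hy⟩)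
    have hpos : 0 < ccount t y := by omega
    rw [ccount, Finset.card_pos] at hpos
    obtain ⟨x, hx⟩ := hpos
    rw [mem_filter] at hx
    exact ⟨x, hx.2⟩

/-- number of affine solutions of `∑ xᵢ^(t+1) = b` in `F^n` -/
def Ncount (t : ℕ) {F : Type} [Field F] [Fintype F] [DecidableEq F] (n : ℕ) (b : F) : ℕ :=
  (univ.filter fun x : Fin n → F => ∑ i, (x i) ^ (t + 1) = b).card

lemma Ncount_zero_zero : Ncount t 0 (0 : F) = 1 := by
  rw [Ncount]
  have : (univ.filter fun x : Fin 0 → F => ∑ i, (x i) ^ (t + 1) = 0) = univ := by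
    ext x; simp
  rw [this, card_univ]
  simp [Fintype.card_fun]

lemma Ncount_zero_ne {b : F} (hb : b ≠ 0) : Ncount t 0 b = 0 := by
  rw [Ncount]
  have : (univ.filter fun x : Fin 0 → F => ∑ i, (x i) ^ (t + 1) = b) = ∅ := by
    ext x; simp [eq_comm, hb]
  rw [this, card_empty]

lemma Ncount_succ (ht : IsPrimePow t) (hF : Fintype.card F = t ^ 2) (n : ℕ) (b : F) :
    Ncount t (n + 1) b =
      Ncount t n b + (t + 1) * ∑ y ∈ (Kset t F).erase 0, Ncount t n (b - y) := by
  -- step 1 : fiber over the first coordinate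
  have step1 : Ncount t (n + 1) b = ∑ x₀ : F, Ncount t n (b - x₀ ^ (t + 1)) := by
    rw [Ncount]
    rw [Finset.card_eq_sum_card_fiberwise
      (f := fun x : Fin (n + 1) → F => x 0) (t := univ) (fun x _ => mem_univ _)]
    apply Finset.sum_congr rfl
    intro x₀ _
    rw [Ncount]
    refine Finset.card_bij' (fun x _ => Fin.tail x) (fun y _ => Fin.cons x₀ y) ?_ ?_ ?_ ?_
    · intro x hx
      simp only [mem_filter, mem_univ, true_and] at hx ⊢
      obtain ⟨h1, h2⟩ := hx
      rw [Fin.sum_univ_succ] at h1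
      rw [eq_sub_iff_add_eq, ← h2, add_comm]
      simpa [Fin.tail] using h1
    · intro y hy
      simp only [mem_filter, mem_univ, true_and] at hy ⊢
      refine ⟨?_, Fin.cons_zero _ _⟩
      rw [Fin.sum_univ_succ]
      simp only [Fin.cons_zero, Fin.cons_succ]
      rw [hy]
      ring
    · intro x hx
      simp only [mem_filter, mem_univ, true_and] at hx
      show Fin.cons x₀ (Fin.tail x) = x
      rw [← hx.2]
      exact Fin.cons_self_tail x
    · intro y _
      exact Fin.tail_cons _ _
  -- step 2 : group the first coordinate by the value of `x₀^(t+1)`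
  have step2 : ∑ x₀ : F, Ncount t n (b - x₀ ^ (t + 1)) =
      ∑ y ∈ Kset t F, ccount t y * Ncount t n (b - y) := by
    rw [← Finset.sum_fiberwise_of_maps_to
      (g := fun x₀ : F => x₀ ^ (t + 1)) (t := Kset t F) (fun x _ => herm_f_mem hF x)]
    apply Finset.sum_congr rfl
    intro y _
    rw [Finset.sum_congr rfl (fun x hx => ?_), Finset.sum_const, smul_eq_mul]
    · rfl
    · simp only [mem_filter] at hx
      rw [hx.2]
  rw [step1, step2]
  have h0K : (0 : F) ∈ Kset t F := (Kset_zero).resolve_right ht.pos.ne'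
  rw [← Finset.add_sum_erase _ _ h0K, ccount_zero, sub_zero, one_mul]
  congr 1
  rw [Finset.mul_sum]
  apply Finset.sum_congr rfl
  intro y hy
  rw [ccount_eq ht hF hy]

lemma Ncount_symm (ht : IsPrimePow t) (hF : Fintype.card F = t ^ 2) (n : ℕ) {b b' : F}
    (hb : b ∈ (Kset t F).erase 0) (hb' : b' ∈ (Kset t F).erase 0) :
    Ncount t n b = Ncount t n b' := by
  rw [mem_erase] at hb hb'
  obtain ⟨hb0, hbK⟩ := hb
  obtain ⟨hb'0, hb'K⟩ := hb'
  have hu : b' * b⁻¹ ∈ Kset t F := Kset_mul hb'K (Kset_inv hbK)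
  obtain ⟨lam, hlam⟩ := herm_surj ht hF hu
  have hu0 : b' * b⁻¹ ≠ 0 := mul_ne_zero hb'0 (inv_ne_zero hb0)
  have hlam0 : lam ≠ 0 := by
    rintro rfl
    rw [zero_pow (Nat.succ_ne_zero t)] at hlam
    exact hu0 hlam.symm
  have hkey : ∀ (x : Fin n → F) (c : F), ∑ i, (c * x i) ^ (t + 1) =
      c ^ (t + 1) * ∑ i, (x i) ^ (t + 1) := by
    intro x c
    rw [Finset.mul_sum]
    exact Finset.sum_congr rfl fun i _ => by ring
  unfold Ncount
  refine Finset.card_bij' (fun x _ => fun j => lam * x j)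
    (fun y _ => fun j => lam⁻¹ * y j) ?_ ?_ ?_ ?_
  · intro x hx
    simp only [mem_filter, mem_univ, true_and] at hx ⊢
    rw [hkey, hx, hlam]
    field_simp
  · intro y hy
    simp only [mem_filter, mem_univ, true_and] at hy ⊢
    rw [hkey, hy, inv_pow, hlam]
    field_simp
  · intro x _
    funext j
    show lam⁻¹ * (lam * x j) = x j
    field_simp
  · intro y _
    funext j
    show lam * (lam⁻¹ * y j) = y j
    field_simp

lemma Ncount_total (ht : IsPrimePow t) (hF : Fintype.card F = t ^ 2) (n : ℕ) {b₀ : F}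
    (hb₀ : b₀ ∈ (Kset t F).erase 0) :
    Ncount t n (0 : F) + (t - 1) * Ncount t n b₀ = (t ^ 2) ^ n := by
  have h0K : (0 : F) ∈ Kset t F := (Kset_zero).resolve_right ht.pos.ne'
  have hmem : ∀ x : Fin n → F, x ∈ (univ : Finset (Fin n → F)) →
      (∑ i, (x i) ^ (t + 1)) ∈ Kset t F := by
    intro x _
    apply Finset.sum_induction _ (· ∈ Kset t F) (fun a b ha hb => Kset_add ht hF ha hb) h0K
    intro i _
    exact herm_f_mem hF (x i)
  have key : (univ : Finset (Fin n → F)).card = ∑ b ∈ Kset t F, Ncount t n b :=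
    Finset.card_eq_sum_card_fiberwise hmem
  rw [card_univ, Fintype.card_fun, hF, Fintype.card_fin] at key
  rw [← Finset.add_sum_erase _ _ h0K] at key
  have hconst : ∑ b ∈ (Kset t F).erase 0, Ncount t n b =
      ((Kset t F).erase 0).card * Ncount t n b₀ := by
    apply Finset.sum_const_nat
    intro b hb
    exact Ncount_symm ht hF n hb hb₀
  rw [hconst, Kset_erase_card ht hF] at key
  exact key.symm

lemma herm_cancel {a b c x y : ℕ} (h1 : a + c * x = b) (h2 : a + c * y = b) (hc : 0 < c) :
    x = y := by
  have : c * x = c * y := by omega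
  exact Nat.eq_of_mul_eq_mul_left hc this

lemma Ncount_four (ht : IsPrimePow t) (hF : Fintype.card F = t ^ 2) :
    Ncount t 4 (0 : F) = (t ^ 2 + 1) * (t ^ 3 + 1) * (t ^ 2 - 1) + 1 := by
  have h2 : 2 ≤ t := ht.two_le
  -- pick a nonzero element of K
  have hcard := Kset_erase_card (F := F) ht hF
  have hne : ((Kset t F).erase 0).Nonempty := by
    rw [← Finset.card_pos, hcard]; omega
  obtain ⟨b₀, hb₀⟩ := hne
  -- the sum appearing in the recursion
  have hsum : ∀ n : ℕ, ∑ y ∈ (Kset t F).erase 0, Ncount t n ((0 : F) - y) =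
      (t - 1) * Ncount t n b₀ := by
    intro n
    rw [Finset.sum_const_nat (m := Ncount t n b₀) ?_, hcard]
    intro y hy
    rw [mem_erase] at hy
    have : (0 : F) - y ∈ (Kset t F).erase 0 := by
      rw [zero_sub, mem_erase]
      exact ⟨neg_ne_zero.mpr hy.1, Kset_neg ht hF hy.2⟩
    exact Ncount_symm ht hF n this hb₀
  -- base cases
  have hN1 : Ncount t 1 (0 : F) = 1 := by
    rw [show (1 : ℕ) = 0 + 1 from rfl, Ncount_succ ht hF 0 (0 : F), Ncount_zero_zero]
    have : ∑ y ∈ (Kset t F).erase 0, Ncount t 0 ((0 : F) - y) = 0 := by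
      apply Finset.sum_eq_zero
      intro y hy
      rw [mem_erase] at hy
      exact Ncount_zero_ne (by rw [zero_sub]; exact neg_ne_zero.mpr hy.1)
    rw [this, Nat.mul_zero, Nat.add_zero]
  obtain ⟨u, rfl⟩ := Nat.exists_eq_add_of_le h2
  set T : ℕ := 2 + u with hT
  -- value of `Ncount 1 b₀`
  have hB1 : Ncount T 1 b₀ = T + 1 := by
    have h1 := Ncount_total (F := F) ht hF 1 hb₀
    rw [hN1] at h1
    have h2' : (1 : ℕ) + (T - 1) * (T + 1) = (T ^ 2) ^ 1 := by
      have e1 : T - 1 = u + 1 := by omega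
      rw [e1, hT]; ring
    exact herm_cancel h1 h2' (by omega)
  -- N2
  have hN2 : Ncount T 2 (0 : F) = 1 + (T - 1) * (T + 1) * (T + 1) := by
    rw [show (2 : ℕ) = 1 + 1 from rfl, Ncount_succ ht hF 1 (0 : F), hN1, hsum 1, hB1]
    ring
  -- B2
  have hB2 : Ncount T 2 b₀ = u ^ 3 + 6 * u ^ 2 + 11 * u + 6 := by
    have h1 := Ncount_total (F := F) ht hF 2 hb₀
    rw [hN2] at h1
    have h2' : 1 + (T - 1) * (T + 1) * (T + 1) +
        (T - 1) * (u ^ 3 + 6 * u ^ 2 + 11 * u + 6) = (T ^ 2) ^ 2 := by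
      have e1 : T - 1 = u + 1 := by omega
      rw [e1, hT]; ring
    exact herm_cancel h1 h2' (by omega)
  -- N3
  have hN3 : Ncount T 3 (0 : F) = 1 + (T - 1) * (T + 1) * (T + 1) +
      (T + 1) * ((T - 1) * (u ^ 3 + 6 * u ^ 2 + 11 * u + 6)) := by
    rw [show (3 : ℕ) = 2 + 1 from rfl, Ncount_succ ht hF 2 (0 : F), hN2, hsum 2, hB2]
  -- B3
  have hB3 : Ncount T 3 b₀ = T ^ 5 + T ^ 2 := by
    have h1 := Ncount_total (F := F) ht hF 3 hb₀
    rw [hN3] at h1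
    have h2' : 1 + (T - 1) * (T + 1) * (T + 1) +
        (T + 1) * ((T - 1) * (u ^ 3 + 6 * u ^ 2 + 11 * u + 6)) +
        (T - 1) * (T ^ 5 + T ^ 2) = (T ^ 2) ^ 3 := by
      have e1 : T - 1 = u + 1 := by omega
      rw [e1, hT]; ring
    exact herm_cancel h1 h2' (by omega)
  -- N4
  have hN4 : Ncount T 4 (0 : F) = 1 + (T - 1) * (T + 1) * (T + 1) +
      (T + 1) * ((T - 1) * (u ^ 3 + 6 * u ^ 2 + 11 * u + 6)) +
      (T + 1) * ((T - 1) * (T ^ 5 + T ^ 2)) := by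
    rw [show (4 : ℕ) = 3 + 1 from rfl, Ncount_succ ht hF 3 (0 : F), hN3, hsum 3, hB3]
  rw [hN4]
  have e1 : T - 1 = u + 1 := by omega
  have e2 : T ^ 2 - 1 = u ^ 2 + 4 * u + 3 := by
    have : T ^ 2 = u ^ 2 + 4 * u + 4 := by rw [hT]; ring
    omega
  rw [e1, e2, hT]
  ring

end Herm

open LinearAlgebra.Projectivization Projectivization

theorem hermitian_surface_card' (t : ℕ) (ht : IsPrimePow t)
    (F : Type) [Field F] [Fintype F] (hF : Fintype.card F = t ^ 2) :
    Nat.card {x : ℙ F (Fin 4 → F) | ∑ i : Fin 4, (x.rep i) ^ (t + 1) = 0} =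
      (t ^ 2 + 1) * (t ^ 3 + 1) := by
  classical
  have h2 : 2 ≤ t := ht.two_le
  set S : Set (ℙ F (Fin 4 → F)) :=
    {x : ℙ F (Fin 4 → F) | ∑ i : Fin 4, (x.rep i) ^ (t + 1) = 0} with hS
  set p : (Fin 4 → F) → Prop := fun v => v ≠ 0 ∧ ∑ i, (v i) ^ (t + 1) = 0 with hp
  -- the scaling computation
  have hscale : ∀ (c : F) (v : Fin 4 → F), ∑ i, (c * v i) ^ (t + 1) =
      c ^ (t + 1) * ∑ i, (v i) ^ (t + 1) := by
    intro c v
    rw [Finset.mul_sum]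
    exact Finset.sum_congr rfl fun i _ => by ring
  -- the bijection between S × Fˣ and the nonzero affine solutions
  have happ : ∀ (b : Fˣ) (w : Fin 4 → F) (i : Fin 4), (b • w) i = (b : F) * w i := by
    intro b w i
    simp [Units.smul_def]
  have hg : ∀ (P : ℙ F (Fin 4 → F)), P ∈ S → ∀ b : Fˣ, p (b • P.rep) := by
    intro P hP b
    constructor
    · intro h
      apply P.rep_nonzero
      have := congrArg (fun w => b⁻¹ • w) h
      simpa using this
    · have h0 : ∑ i, (P.rep i) ^ (t + 1) = 0 := hP
      calc ∑ i, ((b • P.rep) i) ^ (t + 1) = ∑ i, ((b : F) * P.rep i) ^ (t + 1) := by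
            exact Finset.sum_congr rfl fun i _ => by rw [happ]
        _ = (b : F) ^ (t + 1) * ∑ i, (P.rep i) ^ (t + 1) := hscale _ _
        _ = 0 := by rw [h0, mul_zero]
  have key : Nat.card (S × Fˣ) = Nat.card {v : Fin 4 → F // p v} := by
    apply Nat.card_eq_of_bijective (fun z => ⟨z.2 • z.1.1.rep,
      hg z.1.1 z.1.2 z.2⟩)
    constructor
    · rintro ⟨⟨P, hP⟩, b⟩ ⟨⟨P', hP'⟩, b'⟩ heq
      have heq' : b • P.rep = b' • P'.rep := congrArg Subtype.val heq
      have hPP' : P = P' := by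
        rw [← mk_rep P, ← mk_rep P']
        rw [mk_eq_mk_iff]
        refine ⟨b⁻¹ * b', ?_⟩
        rw [mul_smul, ← heq', inv_smul_smul]
      subst hPP'
      obtain ⟨i, hi⟩ := Function.ne_iff.mp P.rep_nonzero
      have : (b : F) * P.rep i = (b' : F) * P.rep i := by
        have := congrFun heq' i
        rwa [happ, happ] at this
      have hbb' : (b : F) = (b' : F) := mul_right_cancel₀ hi this
      have hb : b = b' := Units.ext hbb'
      subst hb
      rfl
    · rintro ⟨v, hv0, hvsum⟩
      obtain ⟨a, ha⟩ := exists_smul_eq_mk_rep F v hv0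
      have hPmem : Projectivization.mk F v hv0 ∈ S := by
        show ∑ i, ((Projectivization.mk F v hv0).rep i) ^ (t + 1) = 0
        rw [← ha]
        calc ∑ i, ((a • v) i) ^ (t + 1) = ∑ i, ((a : F) * v i) ^ (t + 1) := by
              exact Finset.sum_congr rfl fun i _ => by rw [happ]
          _ = (a : F) ^ (t + 1) * ∑ i, (v i) ^ (t + 1) := hscale _ _
          _ = 0 := by rw [hvsum, mul_zero]
      refine ⟨⟨⟨Projectivization.mk F v hv0, hPmem⟩, a⁻¹⟩, ?_⟩
      apply Subtype.ext
      show a⁻¹ • (Projectivization.mk F v hv0).rep = v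
      rw [← ha, inv_smul_smul]
  -- compute the affine count
  have haff : Nat.card {v : Fin 4 → F // p v} =
      (t ^ 2 + 1) * (t ^ 3 + 1) * (t ^ 2 - 1) := by
    rw [Nat.card_eq_fintype_card, Fintype.card_subtype]
    have hset : Finset.univ.filter p =
        (Finset.univ.filter fun v : Fin 4 → F => ∑ i, (v i) ^ (t + 1) = 0).erase 0 := by
      ext v
      simp only [hp, Finset.mem_filter, Finset.mem_erase, Finset.mem_univ, true_and]
    have h0mem : (0 : Fin 4 → F) ∈
        (Finset.univ.filter fun v : Fin 4 → F => ∑ i, (v i) ^ (t + 1) = 0) := by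
      simp [zero_pow (Nat.succ_ne_zero t)]
    rw [hset, Finset.card_erase_of_mem h0mem]
    have h4 := Ncount_four (F := F) ht hF
    have h4' : (Finset.univ.filter fun v : Fin 4 → F => ∑ i, (v i) ^ (t + 1) = 0).card =
        (t ^ 2 + 1) * (t ^ 3 + 1) * (t ^ 2 - 1) + 1 := h4
    simp only [h4']
    exact Nat.add_sub_cancel _ _
  -- put everything together
  rw [Nat.card_prod] at key
  have hunits : Nat.card Fˣ = t ^ 2 - 1 := by
    rw [Nat.card_eq_fintype_card, Fintype.card_units, hF]
  rw [hunits, haff] at key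
  have hpos : 0 < t ^ 2 - 1 := by
    have : 2 ^ 2 ≤ t ^ 2 := Nat.pow_le_pow_left h2 2
    omega
  exact Nat.eq_of_mul_eq_mul_right hpos key

/-- The non-degenerate Hermitian surface `x₀^{t+1}+x₁^{t+1}+x₂^{t+1}+x₃^{t+1}=0` in
`PG(3, t²)` has exactly `(t²+1)(t³+1)` rational points over `F_{t²}`. -/
theorem hermitian_surface_card (t : ℕ) (ht : IsPrimePow t)
    (F : Type) [Field F] [Fintype F] (hF : Fintype.card F = t ^ 2) :
    Nat.card {x : ℙ F (Fin 4 → F) | ∑ i : Fin 4, (x.rep i) ^ (t + 1) = 0} =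
      (t ^ 2 + 1) * (t ^ 3 + 1) := hermitian_surface_card' t ht F hF
end

section
/- If H is a plane tangent to the Hermitian surface X at a point P, then X ∩ H is the union of exactly t+1 lines all passing through P. -/
open LinearAlgebra.Projectivization Projectivization Finset

/-- The Hermitian surface in `PG(3,q)`, `q = t²`. -/
def hermSurf (t : ℕ) (F : Type) [Field F] : Set (ℙ F (Fin 4 → F)) :=
  {x | ∑ i : Fin 4, (x.rep i) ^ (t + 1) = 0}

/-- The tangent plane to the Hermitian surface at a point `P`, given by the
Hermitian polarity `∑ xᵢ · (Pᵢ)^t = 0`. -/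
def hermTangentPlane (t : ℕ) (F : Type) [Field F] (P : ℙ F (Fin 4 → F)) :
    Set (ℙ F (Fin 4 → F)) :=
  {x | ∑ i : Fin 4, x.rep i * (P.rep i) ^ t = 0}

/-- The set of projective points of a linear subspace `W` (a plane if
`finrank W = 3`, a line if `finrank W = 2`). -/
def projSet (F : Type) [Field F] (W : Submodule F (Fin 4 → F)) : Set (ℙ F (Fin 4 → F)) :=
  {x | x.submodule ≤ W}

namespace HermPencil

variable {F : Type} [Field F]

/-- The Hermitian (sesquilinear) form on `F⁴`. -/
def herm (t : ℕ) (v w : Fin 4 → F) : F := ∑ i, v i * w i ^ t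

lemma herm_add_left (t : ℕ) (v v' w : Fin 4 → F) :
    herm t (v + v') w = herm t v w + herm t v' w := by
  simp [herm, add_mul, Finset.sum_add_distrib]

lemma herm_smul_left (t : ℕ) (a : F) (v w : Fin 4 → F) :
    herm t (a • v) w = a * herm t v w := by
  simp [herm, Finset.mul_sum, mul_assoc]

lemma herm_zero_left (t : ℕ) (w : Fin 4 → F) : herm t 0 w = 0 := by
  simp [herm]

lemma herm_sub_left (t : ℕ) (v v' w : Fin 4 → F) :
    herm t (v - v') w = herm t v w - herm t v' w := by
  simp [herm, sub_mul, Finset.sum_sub_distrib]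

/-- The Hermitian form as a linear functional in the first argument. -/
def hermL (t : ℕ) (z : Fin 4 → F) : (Fin 4 → F) →ₗ[F] F where
  toFun v := herm t v z
  map_add' v w := herm_add_left t v w z
  map_smul' a v := herm_smul_left t a v z

/-- A vector annihilating fewer than 4 functionals exists. -/
lemma exists_ne_zero_ann {n : ℕ} (hn : n < 4) (t : ℕ) (zs : Fin n → (Fin 4 → F)) :
    ∃ w : Fin 4 → F, w ≠ 0 ∧ ∀ i, herm t w (zs i) = 0 := by
  set Φ : (Fin 4 → F) →ₗ[F] (Fin n → F) := LinearMap.pi (fun i => hermL t (zs i)) with hΦ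
  have hrn := LinearMap.finrank_range_add_finrank_ker Φ
  have hdom : Module.finrank F (Fin 4 → F) = 4 := by simp [Module.finrank_pi]
  have hcod : Module.finrank F (Fin n → F) = n := by simp [Module.finrank_pi]
  have hle : Module.finrank F (LinearMap.range Φ) ≤ n := le_trans (Submodule.finrank_le _) (le_of_eq hcod)
  have hker : 0 < Module.finrank F (LinearMap.ker Φ) := by omega
  have hne : LinearMap.ker Φ ≠ ⊥ := by
    intro h
    rw [h, finrank_bot] at hker
    omega
  obtain ⟨w, hwmem, hw0⟩ := Submodule.exists_mem_ne_zero_of_ne_bot hne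
  refine ⟨w, hw0, fun i => ?_⟩
  have := LinearMap.mem_ker.mp hwmem
  have := congrFun this i
  simpa [hΦ, hermL] using this

section Counting

variable [Fintype F] [DecidableEq F]

lemma card_pow_eq_le {n : ℕ} (hn : 0 < n) (c : F) :
    (univ.filter fun x : F => x ^ n = c).card ≤ n := by
  calc (univ.filter fun x : F => x ^ n = c).card
      ≤ (Polynomial.nthRoots n c).toFinset.card := by
        apply Finset.card_le_card
        intro x hx
        simp only [mem_filter, mem_univ, true_and] at hx
        rw [Multiset.mem_toFinset, Polynomial.mem_nthRoots hn]
        exact hx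
    _ ≤ Multiset.card (Polynomial.nthRoots n c) := Multiset.toFinset_card_le _
    _ ≤ n := Polynomial.card_nthRoots n c

lemma card_pow_fiber {t : ℕ} (ht2 : 2 ≤ t) (hF : Fintype.card F = t ^ 2)
    {d : F} (hd0 : d ≠ 0) (hdt : d ^ t = d) :
    (univ.filter fun e : F => e ^ (t + 1) = d).card = t + 1 := by
  obtain ⟨m, hm⟩ : ∃ m, t = m + 2 := ⟨t - 2, by omega⟩
  have hm1 : t - 1 = m + 1 := by omega
  have hm3 : t + 1 = m + 3 := by omega
  have hcard2 : t ^ 2 = (t + 1) * (t - 1) + 1 := by rw [hm1, hm3, hm]; ring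
  have hcardu : Nat.card Fˣ = (t + 1) * (t - 1) := by
    rw [Nat.card_eq_fintype_card, Fintype.card_units, hF, hcard2]
    omega
  set f : Fˣ →* Fˣ := powMonoidHom (t + 1) with hfdef
  have hprod : Nat.card Fˣ = Nat.card (Fˣ ⧸ f.ker) * Nat.card f.ker :=
    Subgroup.card_eq_card_quotient_mul_card_subgroup f.ker
  have hquot : Nat.card (Fˣ ⧸ f.ker) = Nat.card f.range :=
    Nat.card_congr (QuotientGroup.quotientKerEquivRange f).toEquiv
  -- kernel bound
  have hker_to_filter : Nat.card f.ker ≤ (univ.filter fun x : F => x ^ (t + 1) = 1).card := by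
    have hinj : Function.Injective
        (fun x : f.ker => (⟨(x : Fˣ) , by
          have h1 : f (x : Fˣ) = 1 := x.2
          have h2 := congrArg Units.val h1
          simp only [mem_filter, mem_univ, true_and]
          simpa [hfdef, powMonoidHom_apply] using h2⟩ :
            {y : F // y ∈ univ.filter fun x : F => x ^ (t + 1) = 1})) := by
      intro a b hab
      simp only [Subtype.mk.injEq] at hab
      exact Subtype.ext (Units.ext hab)
    calc Nat.card f.ker ≤ Nat.card {y : F // y ∈ univ.filter fun x : F => x ^ (t + 1) = 1} :=
          Nat.card_le_card_of_injective _ hinj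
      _ = (univ.filter fun x : F => x ^ (t + 1) = 1).card := by
          rw [Nat.card_eq_fintype_card, Fintype.card_coe]
  have hkerle : Nat.card f.ker ≤ t + 1 :=
    le_trans hker_to_filter (card_pow_eq_le (by omega) 1)
  -- range is inside the (t-1)-st roots of unity
  have hrange_mem : ∀ y : Fˣ, y ∈ f.range → y ^ (t - 1) = 1 := by
    intro y hy
    obtain ⟨x, rfl⟩ := hy
    have hx : f x = x ^ (t + 1) := rfl
    rw [hx, ← pow_mul]
    have h2 : (t + 1) * (t - 1) = t ^ 2 - 1 := by rw [hcard2]; omega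
    rw [h2, ← hF, ← Fintype.card_units, pow_card_eq_one]
  have hrangele : Nat.card f.range ≤ t - 1 := by
    have hinj : Function.Injective
        (fun x : f.range => (⟨((x : Fˣ) : F), by
          have hx := hrange_mem _ x.2
          have h2 := congrArg Units.val hx
          simp only [mem_filter, mem_univ, true_and]
          simpa using h2⟩ : {y : F // y ∈ univ.filter fun x : F => x ^ (t - 1) = 1})) := by
      intro a b hab
      simp only [Subtype.mk.injEq] at hab
      exact Subtype.ext (Units.ext hab)
    calc Nat.card f.range ≤ _ := Nat.card_le_card_of_injective _ hinj
      _ = (univ.filter fun x : F => x ^ (t - 1) = 1).card := by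
          rw [Nat.card_eq_fintype_card, Fintype.card_coe]
      _ ≤ t - 1 := card_pow_eq_le (by omega) 1
  -- exact cardinalities
  have hprod' : (m + 3) * (m + 1) = Nat.card f.range * Nat.card f.ker := by
    rw [← hm3, ← hm1, ← hcardu, hprod, hquot]
  have hrangele' : Nat.card f.range ≤ m + 1 := by omega
  have hkereq : Nat.card f.ker = t + 1 := by
    rw [hm3]
    by_contra hne
    have hble : Nat.card f.ker ≤ m + 2 := by omega
    have h1 := Nat.mul_le_mul hrangele' hble
    nlinarith [hprod']
  have hrangeeq : Nat.card f.range = t - 1 := by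
    rw [hm1]
    have h1 : (m + 3) * (m + 1) = Nat.card f.range * (m + 3) := by
      rw [hprod', hkereq, hm3]
    have h2 : (m + 3) * (m + 1) = (m + 3) * Nat.card f.range := by rw [h1]; ring
    exact (Nat.eq_of_mul_eq_mul_left (by omega) h2).symm
  -- d is in the range
  have hdu : (Units.mk0 d hd0) ^ (t - 1) = 1 := by
    have hd1 : d ^ (t - 1) = 1 := by
      have h1 : d ^ (t - 1) * d = d := by
        rw [← pow_succ]
        have h2 : t - 1 + 1 = t := by omega
        rw [h2, hdt]
      exact mul_right_cancel₀ hd0 (h1.trans (one_mul d).symm)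
    ext
    simpa using hd1
  have hdrange : Units.mk0 d hd0 ∈ f.range := by
    by_contra hnot
    set RF : Finset Fˣ := univ.filter (fun x => x ∈ f.range) with hRF
    set UF : Finset Fˣ := univ.filter (fun x => x ^ (t - 1) = 1) with hUF
    have hsub : RF ⊆ UF := by
      intro x hx
      simp only [hRF, hUF, mem_filter, mem_univ, true_and] at hx ⊢
      exact hrange_mem x hx
    have hRFcard : RF.card = t - 1 := by
      have e : ↥f.range ≃ {x : Fˣ // x ∈ RF} :=
        Equiv.subtypeEquivRight (by intro x; simp [hRF])
      have h1 : Nat.card f.range = RF.card := by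
        rw [Nat.card_congr e, Nat.card_eq_finsetCard]
      rw [← h1, hrangeeq]
    have hUFle : UF.card ≤ t - 1 := by
      have hinj : Set.InjOn (fun x : Fˣ => (x : F)) UF := by
        intro a _ b _ hab; exact Units.ext hab
      calc UF.card = (UF.image (fun x : Fˣ => (x : F))).card :=
            (Finset.card_image_of_injOn hinj).symm
        _ ≤ (univ.filter fun x : F => x ^ (t - 1) = 1).card := by
            apply Finset.card_le_card
            intro y hy
            simp only [Finset.mem_image] at hy
            obtain ⟨x, hx, rfl⟩ := hy
            simp only [hUF, mem_filter, mem_univ, true_and] at hx ⊢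
            have h2 := congrArg Units.val hx
            simpa using h2
        _ ≤ t - 1 := card_pow_eq_le (by omega) 1
    have heq : RF = UF := Finset.eq_of_subset_of_card_le hsub (by omega)
    have hmem : Units.mk0 d hd0 ∈ RF := by
      rw [heq, hUF]
      simp only [mem_filter, mem_univ, true_and]
      exact hdu
    rw [hRF] at hmem
    simp only [mem_filter, mem_univ, true_and] at hmem
    exact hnot hmem
  obtain ⟨xu, hxu⟩ := hdrange
  have he₀0 : ((xu : F)) ≠ 0 := Units.ne_zero xu
  have he₀d : ((xu : F)) ^ (t + 1) = d := by
    have h1 := congrArg Units.val hxu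
    simpa [hfdef, powMonoidHom_apply] using h1
  set e₀ : F := (xu : F) with he₀def
  -- fiber over d is a coset of the kernel
  have hbij : (univ.filter fun e : F => e ^ (t + 1) = d).card
      = (univ.filter fun e : F => e ^ (t + 1) = 1).card := by
    apply Finset.card_bij' (fun x _ => e₀⁻¹ * x) (fun y _ => e₀ * y)
    · intro x hx
      simp only [mem_filter, mem_univ, true_and] at hx ⊢
      rw [mul_pow, inv_pow, he₀d, hx]
      exact inv_mul_cancel₀ hd0
    · intro y hy
      simp only [mem_filter, mem_univ, true_and] at hy ⊢
      rw [mul_pow, he₀d, hy, mul_one]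
    · intro x _
      field_simp
    · intro y _
      field_simp
  have hone : (univ.filter fun e : F => e ^ (t + 1) = 1).card = t + 1 := by
    have h1 : (univ.filter fun e : F => e ^ (t + 1) = 1).card ≤ t + 1 :=
      card_pow_eq_le (by omega) 1
    have h2 := hker_to_filter
    rw [hkereq] at h2
    omega
  rw [hbij, hone]

end Counting

/-- Linear combination map given four vectors. -/
def comb (a b c d : Fin 4 → F) : (Fin 4 → F) →ₗ[F] (Fin 4 → F) :=
  (LinearMap.proj 0).smulRight a + (LinearMap.proj 1).smulRight b +
  (LinearMap.proj 2).smulRight c + (LinearMap.proj 3).smulRight d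

lemma comb_apply (a b c d : Fin 4 → F) (x : Fin 4 → F) :
    comb a b c d x = x 0 • a + x 1 • b + x 2 • c + x 3 • d := by
  simp [comb]

section Key

variable [Fintype F] [DecidableEq F]

lemma key (t : ℕ) (ht : IsPrimePow t) (hF : Fintype.card F = t ^ 2)
    (p : Fin 4 → F) (hp0 : p ≠ 0) (hpp : herm t p p = 0) :
    ∃ L : Finset (Submodule F (Fin 4 → F)), L.card = t + 1 ∧
      (∀ W ∈ L, Module.finrank F W = 2 ∧ p ∈ W) ∧
      ∀ v : Fin 4 → F, (herm t v v = 0 ∧ herm t v p = 0) ↔ ∃ W ∈ L, v ∈ W := by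
  classical
  obtain ⟨pp, k, hpprime', hk, hT⟩ := ht
  have hpprime : pp.Prime := Nat.prime_iff.mpr hpprime'
  haveI : Fact pp.Prime := ⟨hpprime⟩
  have t2 : 2 ≤ t := by
    rw [← hT]
    calc 2 = 2 ^ 1 := rfl
    _ ≤ pp ^ 1 := Nat.pow_le_pow_left hpprime.two_le 1
    _ ≤ pp ^ k := Nat.pow_le_pow_right hpprime.pos hk
  have t0 : t ≠ 0 := by omega
  -- characteristic
  haveI hchar : CharP F pp := by
    haveI := ringChar.charP F
    have hrprime : (ringChar F).Prime := CharP.char_is_prime F (ringChar F)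
    obtain ⟨n, hn, hcard⟩ := FiniteField.card F (ringChar F)
    have hdvd : pp ∣ (ringChar F) ^ (n : ℕ) := by
      rw [← hcard, hF, ← hT, ← pow_mul]
      exact dvd_pow_self pp (by omega : k * 2 ≠ 0)
    have : pp ∣ ringChar F := hpprime.dvd_of_dvd_pow hdvd
    have : pp = ringChar F := ((Nat.prime_dvd_prime_iff_eq hpprime hrprime).mp this)
    rw [this]
    exact ringChar.charP F
  haveI : ExpChar F pp := ExpChar.prime hpprime
  -- Frobenius facts
  have hfrob : ∀ a b : F, (a + b) ^ t = a ^ t + b ^ t := by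
    intro a b
    rw [← hT]
    exact add_pow_expChar_pow a b pp k
  have hfneg : ∀ a : F, (-a) ^ t = -(a ^ t) := by
    intro a
    have h1 := hfrob a (-a)
    rw [add_neg_cancel, zero_pow t0] at h1
    linear_combination -h1
  have hsum4 : ∀ g : Fin 4 → F, (∑ i, g i) ^ t = ∑ i, (g i) ^ t := by
    intro g
    rw [Fin.sum_univ_four, Fin.sum_univ_four, hfrob, hfrob, hfrob]
  have hpowtt : ∀ a : F, (a ^ t) ^ t = a := by
    intro a
    rw [← pow_mul, ← sq, ← hF]
    exact FiniteField.pow_card a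
  have hconj : ∀ v w : Fin 4 → F, herm t w v = (herm t v w) ^ t := by
    intro v w
    have h1 : (herm t v w) ^ t = ∑ i, (v i) ^ t * w i := by
      rw [herm, hsum4 (fun i => v i * w i ^ t)]
      apply Finset.sum_congr rfl
      intro i _
      rw [mul_pow, hpowtt]
    rw [h1, herm]
    apply Finset.sum_congr rfl
    intro i _
    rw [mul_comm]
  have hsmul_r : ∀ (a : F) (v w : Fin 4 → F), herm t v (a • w) = a ^ t * herm t v w := by
    intro a v w
    rw [herm, herm, Finset.mul_sum]
    apply Finset.sum_congr rfl
    intro i _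
    rw [Pi.smul_apply, smul_eq_mul, mul_pow]
    ring
  have hadd_r : ∀ (v w w' : Fin 4 → F), herm t v (w + w') = herm t v w + herm t v w' := by
    intro v w w'
    rw [herm, herm, herm, ← Finset.sum_add_distrib]
    apply Finset.sum_congr rfl
    intro i _
    rw [Pi.add_apply, hfrob]
    ring
  have hsingle_r : ∀ (i : Fin 4) (w : Fin 4 → F), herm t w (Pi.single i 1) = w i := by
    intro i w
    rw [herm]
    rw [Finset.sum_eq_single i]
    · simp
    · intro j _ hj
      rw [Pi.single_apply, if_neg (by exact fun h => hj h), zero_pow t0, mul_zero]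
    · intro h
      exact absurd (Finset.mem_univ i) h
  have hnd1 : ∀ w : Fin 4 → F, (∀ v, herm t w v = 0) → w = 0 := by
    intro w hw
    funext i
    have := hw (Pi.single i 1)
    rw [hsingle_r] at this
    exact this
  -- a vector u with ⟨u,p⟩ = 1
  have hsingle_l : ∀ (i : Fin 4) (w : Fin 4 → F), herm t (Pi.single i 1) w = w i ^ t := by
    intro i w
    rw [herm, Finset.sum_eq_single i]
    · simp
    · intro j _ hj
      rw [Pi.single_apply, if_neg (fun h => hj h), zero_mul]
    · intro h
      exact absurd (Finset.mem_univ i) h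
  obtain ⟨i₀, hi₀⟩ : ∃ i, p i ≠ 0 := by
    by_contra hno
    push_neg at hno
    exact hp0 (funext hno)
  obtain ⟨u, hup⟩ : ∃ u : Fin 4 → F, herm t u p = 1 := by
    refine ⟨((p i₀ ^ t)⁻¹) • (Pi.single i₀ 1 : Fin 4 → F), ?_⟩
    rw [herm_smul_left, hsingle_l]
    field_simp
  have hpu : herm t p u = 1 := by
    rw [hconj u p, hup, one_pow]
  -- relative nondegeneracy
  have hWnd : ∀ w₀ : Fin 4 → F, herm t w₀ p = 0 → herm t w₀ u = 0 →
      (∀ w', herm t w' p = 0 → herm t w' u = 0 → herm t w' w₀ = 0) → w₀ = 0 := by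
    intro w₀ h1 h2 hall
    apply hnd1
    intro v0
    have hvw : herm t v0 w₀ = 0 := by
      set cp := herm t v0 p with hcp
      set γ := herm t v0 u - cp * herm t u u with hγ
      set w' : Fin 4 → F := v0 - cp • u - γ • p with hw'
      have hw'p : herm t w' p = 0 := by
        rw [hw', herm_sub_left, herm_sub_left, herm_smul_left, herm_smul_left, hup, hpp]
        rw [hcp]
        ring
      have hw'u : herm t w' u = 0 := by
        rw [hw', herm_sub_left, herm_sub_left, herm_smul_left, herm_smul_left, hpu]
        rw [hγ]
        ring
      have h3 := hall w' hw'p hw'u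
      rw [hw', herm_sub_left, herm_sub_left, herm_smul_left, herm_smul_left] at h3
      have hu0 : herm t u w₀ = 0 := by rw [hconj w₀ u, h2, zero_pow t0]
      have hp0' : herm t p w₀ = 0 := by rw [hconj w₀ p, h1, zero_pow t0]
      rw [hu0, hp0'] at h3
      linear_combination h3
    rw [hconj v0 w₀, hvw, zero_pow t0]
  -- a non-isotropic vector in the tangent hyperplane
  have hw₁ex : ∃ w₁, (herm t w₁ p = 0 ∧ herm t w₁ u = 0) ∧ herm t w₁ w₁ ≠ 0 := by
    by_contra hno
    push_neg at hno
    have hiso : ∀ w, herm t w p = 0 → herm t w u = 0 → herm t w w = 0 := by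
      intro w h1 h2
      exact hno w ⟨h1, h2⟩
    obtain ⟨w₀, hw₀0, hw₀ann⟩ := exists_ne_zero_ann (by omega) t ![p, u]
    have hw₀p : herm t w₀ p = 0 := by simpa using hw₀ann 0
    have hw₀u : herm t w₀ u = 0 := by simpa using hw₀ann 1
    have hnall : ¬ (∀ w', herm t w' p = 0 → herm t w' u = 0 → herm t w' w₀ = 0) := by
      intro hall
      exact hw₀0 (hWnd w₀ hw₀p hw₀u hall)
    push_neg at hnall
    obtain ⟨w', hw'p, hw'u, hm⟩ := hnall
    set m := herm t w' w₀ with hmdef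
    have hlam : ∀ lam : F, lam ^ t * m ^ t + lam * m = 0 := by
      intro lam
      have h1 := hiso (w₀ + lam • w')
        (by rw [herm_add_left, herm_smul_left, hw₀p, hw'p]; ring)
        (by rw [herm_add_left, herm_smul_left, hw₀u, hw'u]; ring)
      have hw₀w₀ : herm t w₀ w₀ = 0 := hiso w₀ hw₀p hw₀u
      have hw'w' : herm t w' w' = 0 := hiso w' hw'p hw'u
      have hw₀w' : herm t w₀ w' = m ^ t := by rw [hconj w' w₀, hmdef]
      simp only [herm_add_left, hadd_r, herm_smul_left, hsmul_r] at h1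
      rw [hw₀w₀, hw₀w', hw'w', ← hmdef] at h1
      linear_combination h1
    have hmt : m ^ t = -m := by
      have h2 := hlam 1
      rw [one_pow] at h2
      linear_combination h2 - hlam 1 + h2
    have hall : ∀ lam : F, lam ^ t = lam := by
      intro lam
      have h2 := hlam lam
      rw [hmt] at h2
      have h3 : m * (lam - lam ^ t) = 0 := by linear_combination h2
      rcases mul_eq_zero.mp h3 with h | h
      · exact absurd h hm
      · exact (sub_eq_zero.mp h).symm
    have hcardle : (univ : Finset F).card ≤ t := by
      have hsub : (univ : Finset F) ⊆ insert (0 : F) (univ.filter fun x : F => x ^ (t - 1) = 1) := by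
        intro x _
        rcases eq_or_ne x 0 with rfl | hx
        · exact Finset.mem_insert_self _ _
        · apply Finset.mem_insert_of_mem
          simp only [mem_filter, mem_univ, true_and]
          have h4 := hall x
          have h5 : x ^ (t - 1) * x = x := by
            rw [← pow_succ]
            have h6 : t - 1 + 1 = t := by omega
            rw [h6, h4]
          exact mul_right_cancel₀ hx (h5.trans (one_mul x).symm)
      calc (univ : Finset F).card ≤ _ := Finset.card_le_card hsub
        _ ≤ (univ.filter fun x : F => x ^ (t - 1) = 1).card + 1 := Finset.card_insert_le _ _
        _ ≤ (t - 1) + 1 := by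
            have := card_pow_eq_le (F := F) (n := t - 1) (by omega) 1
            omega
        _ ≤ t := by omega
    have hcard' : t ^ 2 ≤ t := by
      rw [← hF, ← Finset.card_univ]
      exact hcardle
    have hts : t ^ 2 = t * t := sq t
    have h2t : 2 * t ≤ t * t := Nat.mul_le_mul_right t t2
    omega
  obtain ⟨w₁, ⟨hw₁p, hw₁u⟩, hc₁0⟩ := hw₁ex
  obtain ⟨w₂, hw₂0, hw₂ann⟩ := exists_ne_zero_ann (by omega) t ![p, u, w₁]
  have hw₂p : herm t w₂ p = 0 := by simpa using hw₂ann 0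
  have hw₂u : herm t w₂ u = 0 := by simpa using hw₂ann 1
  have hw₂w₁ : herm t w₂ w₁ = 0 := by simpa using hw₂ann 2
  -- conjugate value table
  have hpw₁ : herm t p w₁ = 0 := by rw [hconj w₁ p, hw₁p, zero_pow t0]
  have hpw₂ : herm t p w₂ = 0 := by rw [hconj w₂ p, hw₂p, zero_pow t0]
  have huw₁ : herm t u w₁ = 0 := by rw [hconj w₁ u, hw₁u, zero_pow t0]
  have huw₂ : herm t u w₂ = 0 := by rw [hconj w₂ u, hw₂u, zero_pow t0]
  have hw₁w₂ : herm t w₁ w₂ = 0 := by rw [hconj w₂ w₁, hw₂w₁, zero_pow t0]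
  -- the decomposition map
  set T := comb p u w₁ w₂ with hT4
  have hexp_l : ∀ (x : Fin 4 → F) (z : Fin 4 → F), herm t (T x) z
      = x 0 * herm t p z + x 1 * herm t u z + x 2 * herm t w₁ z + x 3 * herm t w₂ z := by
    intro x z
    rw [hT4, comb_apply]
    simp only [herm_add_left, herm_smul_left]
  have hexp_r : ∀ (z : Fin 4 → F) (x : Fin 4 → F), herm t z (T x)
      = (x 0) ^ t * herm t z p + (x 1) ^ t * herm t z u
        + (x 2) ^ t * herm t z w₁ + (x 3) ^ t * herm t z w₂ := by
    intro z x
    rw [hT4, comb_apply]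
    simp only [hadd_r, hsmul_r]
  have hTinj : Function.Injective T := by
    rw [← LinearMap.ker_eq_bot, Submodule.eq_bot_iff]
    intro x hx
    have hx0 : T x = 0 := hx
    have e1 : x 1 = 0 := by
      have h := congrArg (fun v => herm t v p) hx0
      rw [hexp_l, herm_zero_left, hpp, hup, hw₁p, hw₂p] at h
      linear_combination h
    have e0 : x 0 = 0 := by
      have h := congrArg (fun v => herm t v u) hx0
      rw [hexp_l, herm_zero_left, hpu, hw₁u, hw₂u, e1] at h
      linear_combination h
    have e2 : x 2 = 0 := by
      have h := congrArg (fun v => herm t v w₁) hx0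
      rw [hexp_l, herm_zero_left, hpw₁, huw₁, hw₂w₁] at h
      have h2 : x 2 * herm t w₁ w₁ = 0 := by linear_combination h
      rcases mul_eq_zero.mp h2 with h3 | h3
      · exact h3
      · exact absurd h3 hc₁0
    have e3 : x 3 = 0 := by
      have h : x 3 • w₂ = 0 := by
        have h4 := hx0
        rw [hT4, comb_apply, e0, e1, e2] at h4
        simpa using h4
      rcases smul_eq_zero.mp h with h3 | h3
      · exact h3
      · exact absurd h3 hw₂0
    funext i
    fin_cases i
    · exact e0
    · exact e1
    · exact e2
    · exact e3
  have hTsurj : Function.Surjective T := LinearMap.injective_iff_surjective.mp hTinj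
  have hc₂0 : herm t w₂ w₂ ≠ 0 := by
    intro h0
    apply hw₂0
    apply hnd1
    intro v
    obtain ⟨x, rfl⟩ := hTsurj v
    rw [hexp_r, hw₂p, hw₂u, hw₂w₁, h0]
    ring
  set c₁ := herm t w₁ w₁ with hc₁def
  set c₂ := herm t w₂ w₂ with hc₂def
  have hc₁t : c₁ ^ t = c₁ := (hconj w₁ w₁).symm
  have hc₂t : c₂ ^ t = c₂ := (hconj w₂ w₂).symm
  set d : F := -(c₂ * c₁⁻¹) with hddef
  have hd0 : d ≠ 0 := by
    rw [hddef]
    exact neg_ne_zero.mpr (mul_ne_zero hc₂0 (inv_ne_zero hc₁0))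
  have hdt : d ^ t = d := by
    rw [hddef, hfneg, mul_pow, inv_pow, hc₁t, hc₂t]
  set E := univ.filter (fun e : F => e ^ (t + 1) = d) with hEdef
  have hE : E.card = t + 1 := card_pow_fiber t2 hF hd0 hdt
  have hvp : ∀ e : F, herm t ((e • w₁ + w₂)) p = 0 := by
    intro e
    simp only [herm_add_left, herm_smul_left, hw₁p, hw₂p]
    ring
  have hvu : ∀ e : F, herm t ((e • w₁ + w₂)) u = 0 := by
    intro e
    simp only [herm_add_left, herm_smul_left, hw₁u, hw₂u]
    ring
  have hvw₁ : ∀ e : F, herm t ((e • w₁ + w₂)) w₁ = e * c₁ := by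
    intro e
    simp only [herm_add_left, herm_smul_left, hw₂w₁]
    ring
  have hvw₂ : ∀ e : F, herm t ((e • w₁ + w₂)) w₂ = c₂ := by
    intro e
    simp only [herm_add_left, herm_smul_left, hw₁w₂]
    ring
  have hvv : ∀ e : F, e ^ (t + 1) = d → herm t (e • w₁ + w₂) (e • w₁ + w₂) = 0 := by
    intro e he
    have e1 : herm t (e • w₁ + w₂) (e • w₁ + w₂) = e ^ t * (e * c₁) + c₂ := by
      simp only [herm_add_left, herm_smul_left, hadd_r, hsmul_r, hw₁w₂, hw₂w₁]
      ring
    rw [e1]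
    have e2 : e ^ t * (e * c₁) = e ^ (t + 1) * c₁ := by
      rw [pow_succ]
      ring
    rw [e2, he, hddef]
    field_simp
    ring
  set L := E.image (fun e => Submodule.span F {p, (e • w₁ + w₂)}) with hLdef
  have hinjE : Set.InjOn (fun e => Submodule.span F {p, (e • w₁ + w₂)}) (E : Set F) := by
    intro e he e' he' hspan
    simp only at hspan
    have hmem : (e' • w₁ + w₂) ∈ Submodule.span F {p, (e • w₁ + w₂)} := by
      rw [hspan]
      exact Submodule.subset_span (Set.mem_insert_of_mem _ rfl)
    obtain ⟨α, β, hαβ⟩ := Submodule.mem_span_pair.mp hmem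
    have h1 : α = 0 := by
      have h := congrArg (fun v => herm t v u) hαβ
      rw [herm_add_left, herm_smul_left, herm_smul_left, hpu, hvu, hvu] at h
      linear_combination h
    have h2 : β = 1 := by
      have h := congrArg (fun v => herm t v w₂) hαβ
      rw [herm_add_left, herm_smul_left, herm_smul_left, hpw₂, hvw₂, hvw₂, h1] at h
      have h3 : (β - 1) * c₂ = 0 := by linear_combination h
      rcases mul_eq_zero.mp h3 with h4 | h4
      · have := sub_eq_zero.mp h4
        exact this
      · exact absurd h4 hc₂0
    have h := congrArg (fun v => herm t v w₁) hαβ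
    rw [herm_add_left, herm_smul_left, herm_smul_left, hpw₁, hvw₁, hvw₁, h1, h2] at h
    have h4 : (e - e') * c₁ = 0 := by linear_combination h
    rcases mul_eq_zero.mp h4 with h5 | h5
    · exact sub_eq_zero.mp h5
    · exact absurd h5 hc₁0
  have hLcard : L.card = t + 1 := by
    rw [hLdef, Finset.card_image_of_injOn hinjE, hE]
  have hlines : ∀ W ∈ L, Module.finrank F W = 2 ∧ p ∈ W := by
    intro W hW
    rw [hLdef] at hW
    obtain ⟨e, he, rfl⟩ := Finset.mem_image.mp hW
    refine ⟨?_, Submodule.subset_span (Set.mem_insert _ _)⟩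
    have hv0 : (e • w₁ + w₂) ≠ 0 := by
      intro h0
      have h := hvw₂ e
      rw [h0, herm_zero_left] at h
      exact hc₂0 h.symm
    have hpnot : p ∉ Submodule.span F {(e • w₁ + w₂)} := by
      intro hmem
      obtain ⟨β, hβ⟩ := Submodule.mem_span_singleton.mp hmem
      have h := congrArg (fun v => herm t v u) hβ
      rw [herm_smul_left, hvu, hpu] at h
      simp at h
    have hli : LinearIndependent F ((↑) : ({p, (e • w₁ + w₂)} : Set (Fin 4 → F)) → (Fin 4 → F)) :=
      ((linearIndepOn_singleton_iff F (v := id)).mpr hv0).id_insert hpnot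
    haveI : Fintype ({p, (e • w₁ + w₂)} : Set (Fin 4 → F)) := Set.fintypeInsert _ _
    rw [finrank_span_set_eq_card hli]
    have hne : p ≠ (e • w₁ + w₂) := by
      intro h
      have h1 := hvu e
      rw [← h, hpu] at h1
      exact one_ne_zero h1
    rw [Set.toFinset_insert, Set.toFinset_singleton,
      Finset.card_insert_of_notMem (by simp [hne]), Finset.card_singleton]
  refine ⟨L, hLcard, hlines, ?_⟩
  intro v
  constructor
  · rintro ⟨hvv0, hvp0⟩
    obtain ⟨x, rfl⟩ := hTsurj v
    have e1 : x 1 = 0 := by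
      rw [hexp_l, hpp, hup, hw₁p, hw₂p] at hvp0
      linear_combination hvp0
    have e2 : x 2 ^ (t + 1) * c₁ + x 3 ^ (t + 1) * c₂ = 0 := by
      rw [hexp_l, hexp_r, hexp_r, hexp_r, hexp_r] at hvv0
      rw [hpp, hpu, hpw₁, hpw₂, hup, huw₁, huw₂, hw₁p, hw₁u, hw₁w₂, hw₂p, hw₂u, hw₂w₁] at hvv0
      rw [e1, zero_pow t0] at hvv0
      rw [pow_succ, pow_succ]
      linear_combination hvv0
    by_cases h3 : x 3 = 0
    · have h2 : x 2 = 0 := by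
        rw [h3, zero_pow (by omega : t + 1 ≠ 0)] at e2
        have h4 : x 2 ^ (t + 1) * c₁ = 0 := by linear_combination e2
        rcases mul_eq_zero.mp h4 with h5 | h5
        · exact pow_eq_zero_iff (by omega : t + 1 ≠ 0) |>.mp h5
        · exact absurd h5 hc₁0
      obtain ⟨e₀, he₀⟩ := Finset.card_pos.mp (by rw [hE]; omega : 0 < E.card)
      refine ⟨_, Finset.mem_image_of_mem _ he₀, ?_⟩
      have hTx : T x = x 0 • p := by
        rw [hT4, comb_apply, e1, h2, h3]
        simp
      rw [hTx]
      exact Submodule.smul_mem _ _ (Submodule.subset_span (Set.mem_insert _ _))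
    · set e := x 2 * (x 3)⁻¹ with hedef
      have he : e ^ (t + 1) = d := by
        have h5 : (x 3) ^ (t + 1) ≠ 0 := pow_ne_zero _ h3
        rw [hedef, mul_pow, inv_pow, hddef]
        field_simp
        linear_combination e2
      have heE : e ∈ E := by
        rw [hEdef]
        simp only [mem_filter, mem_univ, true_and]
        exact he
      refine ⟨_, Finset.mem_image_of_mem _ heE, ?_⟩
      have h6 : x 3 * e = x 2 := by
        rw [hedef]
        field_simp
      have hTx : T x = x 0 • p + x 3 • (e • w₁ + w₂) := by
        rw [hT4, comb_apply, e1]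
        simp only [smul_add, smul_smul, h6]
        simp only [zero_smul, add_zero]
        abel
      rw [hTx]
      apply Submodule.add_mem
      · exact Submodule.smul_mem _ _ (Submodule.subset_span (Set.mem_insert _ _))
      · exact Submodule.smul_mem _ _ (Submodule.subset_span (Set.mem_insert_of_mem _ rfl))
  · rintro ⟨W, hW, hvW⟩
    rw [hLdef] at hW
    obtain ⟨e, heE, rfl⟩ := Finset.mem_image.mp hW
    have he : e ^ (t + 1) = d := by
      rw [hEdef] at heE
      simpa using heE
    obtain ⟨α, β, hαβ⟩ := Submodule.mem_span_pair.mp hvW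
    obtain ⟨ve, hve⟩ : ∃ ve : Fin 4 → F, ve = e • w₁ + w₂ := ⟨_, rfl⟩
    have hvep : herm t ve p = 0 := by rw [hve]; exact hvp e
    have hvev : herm t ve ve = 0 := by rw [hve]; exact hvv e he
    have hpve : herm t p ve = 0 := by rw [hconj ve p, hvep, zero_pow t0]
    rw [← hve] at hαβ
    constructor
    · rw [← hαβ]
      simp only [herm_add_left, herm_smul_left, hadd_r, hsmul_r, hpp, hpve, hvep, hvev]
      ring
    · rw [← hαβ]
      rw [herm_add_left, herm_smul_left, herm_smul_left, hpp, hvep]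
      ring

end Key

end HermPencil

/-- If a plane `H` is tangent to the Hermitian surface `X` at a point `P`, then
`X ∩ H` is the union of exactly `t+1` lines all passing through `P`. -/
theorem tangent_plane_section_is_pencil_of_lines (t : ℕ) (ht : IsPrimePow t)
    (F : Type) [Field F] [Fintype F] (hF : Fintype.card F = t ^ 2)
    (P : ℙ F (Fin 4 → F)) (hP : P ∈ hermSurf t F) :
    ∃ L : Finset (Submodule F (Fin 4 → F)), L.card = t + 1 ∧
      (∀ W ∈ L, Module.finrank F W = 2 ∧ P.submodule ≤ W) ∧
      hermSurf t F ∩ hermTangentPlane t F P = ⋃ W ∈ L, projSet F W := by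
  classical
  have hsurf_iff : ∀ x : ℙ F (Fin 4 → F),
      x ∈ hermSurf t F ↔ HermPencil.herm t x.rep x.rep = 0 := by
    intro x
    have h1 : (∑ i : Fin 4, (x.rep i) ^ (t + 1)) = HermPencil.herm t x.rep x.rep := by
      apply Finset.sum_congr rfl
      intro i _
      rw [pow_succ]
      exact mul_comm _ _
    constructor
    · intro hx
      rw [← h1]
      exact hx
    · intro hx
      show (∑ i : Fin 4, (x.rep i) ^ (t + 1)) = 0
      rw [h1]
      exact hx
  have htan_iff : ∀ x : ℙ F (Fin 4 → F),
      x ∈ hermTangentPlane t F P ↔ HermPencil.herm t x.rep P.rep = 0 := fun _ => Iff.rfl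
  have hP' : HermPencil.herm t P.rep P.rep = 0 := (hsurf_iff P).mp hP
  obtain ⟨L, hL1, hL2, hL3⟩ := HermPencil.key t ht hF P.rep P.rep_nonzero hP'
  refine ⟨L, hL1, ?_, ?_⟩
  · intro W hW
    obtain ⟨h1, h2⟩ := hL2 W hW
    refine ⟨h1, ?_⟩
    rw [Projectivization.submodule_eq]
    exact (Submodule.span_singleton_le_iff_mem _ _).mpr h2
  · ext x
    simp only [Set.mem_inter_iff, Set.mem_iUnion]
    constructor
    · rintro ⟨hx1, hx2⟩
      obtain ⟨W, hWL, hvW⟩ := (hL3 x.rep).mp ⟨(hsurf_iff x).mp hx1, (htan_iff x).mp hx2⟩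
      refine ⟨W, hWL, ?_⟩
      show x.submodule ≤ W
      rw [Projectivization.submodule_eq]
      exact (Submodule.span_singleton_le_iff_mem _ _).mpr hvW
    · rintro ⟨W, hWL, hxW⟩
      have hsub : x.submodule ≤ W := hxW
      rw [Projectivization.submodule_eq] at hsub
      have hrep : x.rep ∈ W := hsub (Submodule.mem_span_singleton_self _)
      have h := (hL3 x.rep).mpr ⟨W, hWL, hrep⟩
      exact ⟨(hsurf_iff x).mpr h.1, (htan_iff x).mpr h.2⟩
end

section
/- The evaluation map sending a homogeneous polynomial of degree h ≤ t in 4 variables over F_{t^2} to its vector of values at the (normalized) points of the Hermitian surface X in PG(3,t^2) is injective; hence dim C_h(X) = C(3+h, h). -/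
open LinearAlgebra.Projectivization Projectivization Finset

/-- Evaluation of polynomials at the (fixed) representatives of the points of the
Hermitian surface, as a linear map. -/
noncomputable def hermEval (t : ℕ) (F : Type) [Field F] :
    MvPolynomial (Fin 4) F →ₗ[F] (↥(hermSurf t F) → F) where
  toFun f := fun x => MvPolynomial.eval (x : ℙ F (Fin 4 → F)).rep f
  map_add' f g := by funext x; simp
  map_smul' c f := by funext x; simp

/-- The functional code `C_h(X)` of degree-`h` forms on the Hermitian surface. -/
noncomputable def hermCode (t : ℕ) (F : Type) [Field F] (h : ℕ) : Submodule F (↥(hermSurf t F) → F) :=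
  (MvPolynomial.homogeneousSubmodule (Fin 4) F h).map (hermEval t F)

/-- The weight of a codeword: the number of nonzero coordinates. -/
noncomputable def wt (t : ℕ) (F : Type) [Field F] (c : ↥(hermSurf t F) → F) : ℕ :=
  Nat.card {x : ↥(hermSurf t F) // c x ≠ 0}

set_option linter.unusedSectionVars false

namespace HermAux

open MvPolynomial Polynomial

variable {t : ℕ} {F : Type} [Field F] [Fintype F]

lemma exists_frob (ht : IsPrimePow t) (hF : Fintype.card F = t ^ 2) :
    ∃ φ : F →+* F, ∀ x : F, φ x = x ^ t := by
  obtain ⟨p, k, hp, hk, rfl⟩ := ht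
  have hp' : Nat.Prime p := hp.nat_prime
  obtain ⟨n, hcp, hcard⟩ := FiniteField.card F (ringChar F)
  have hcc : p = ringChar F := by
    have hdvd : p ∣ Fintype.card F := by
      rw [hF]
      exact dvd_pow (dvd_pow_self p hk.ne') two_ne_zero
    rw [hcard] at hdvd
    exact (Nat.prime_dvd_prime_iff_eq hp' hcp).mp (hp'.dvd_of_dvd_pow hdvd)
  haveI : CharP F p := hcc ▸ ringChar.charP F
  haveI : ExpChar F p := ExpChar.prime hp'
  exact ⟨iterateFrobenius F p k, fun x => iterateFrobenius_def p k x⟩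

lemma pow_t_t (hF : Fintype.card F = t ^ 2) (x : F) : (x ^ t) ^ t = x := by
  rw [← pow_mul, ← sq, ← hF, FiniteField.pow_card]

/-- `t+1`-st roots of a nonzero element of the subfield `F_t`. -/
lemma exists_roots (ht : IsPrimePow t) (hF : Fintype.card F = t ^ 2)
    {c : F} (hc : c ≠ 0) (hct : c ^ t = c) :
    ∃ S : Finset F, S.card = t + 1 ∧ ∀ u ∈ S, u ^ (t + 1) = c := by
  classical
  have h2 : 2 ≤ t := ht.two_le
  have hcardu : Fintype.card Fˣ = t ^ 2 - 1 := by
    rw [Fintype.card_units, hF]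
  obtain ⟨g, hg⟩ := IsCyclic.exists_generator (α := Fˣ)
  have horder : orderOf g = t ^ 2 - 1 := by
    rw [orderOf_eq_card_of_forall_mem_zpowers hg, Nat.card_eq_fintype_card, hcardu]
  set cu : Fˣ := Units.mk0 c hc with hcu
  obtain ⟨m, hm'⟩ := (mem_powers_iff_mem_zpowers.2 (hg cu) : cu ∈ Submonoid.powers g)
  have hm : g ^ m = cu := hm'
  clear hm'
  have hgone : g ^ (t ^ 2 - 1) = 1 := horder ▸ pow_orderOf_eq_one g
  have hcu1 : cu ^ (t - 1) = 1 := by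
    have h3 : c ^ (t - 1) * c = c := by
      rw [← pow_succ, Nat.sub_add_cancel (by omega)]
      exact hct
    have hc1 : c ^ (t - 1) = 1 := by
      field_simp at h3
      exact h3
    ext
    push_cast
    exact hc1
  have hfact : (t + 1) * (t - 1) = t ^ 2 - 1 := by
    zify [show 1 ≤ t by omega, Nat.one_le_pow 2 t (by omega)]
    ring
  have hdvd : t ^ 2 - 1 ∣ m * (t - 1) := by
    rw [← horder]
    apply orderOf_dvd_of_pow_eq_one
    rw [pow_mul, hm, hcu1]
  have hdvd2 : t + 1 ∣ m := by
    have h1 : (t + 1) * (t - 1) ∣ m * (t - 1) := hfact ▸ hdvd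
    exact (Nat.mul_dvd_mul_iff_right (by omega : 0 < t - 1)).mp h1
  obtain ⟨m', rfl⟩ := hdvd2
  refine ⟨(Finset.range (t + 1)).image (fun j => ((g ^ m' * g ^ (j * (t - 1)) : Fˣ) : F)), ?_, ?_⟩
  · rw [Finset.card_image_of_injOn, Finset.card_range]
    intro i hi j hj hij
    simp only [Finset.coe_range, Set.mem_Iio, Finset.mem_coe] at hi hj
    have heq : (g ^ (i * (t - 1)) : Fˣ) = g ^ (j * (t - 1)) :=
      mul_left_cancel (Units.ext hij)
    have hlt : ∀ i, i < t + 1 → i * (t - 1) < orderOf g := by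
      intro i hi
      rw [horder, ← hfact]
      exact Nat.mul_lt_mul_of_lt_of_le hi le_rfl (by omega)
    have := pow_injOn_Iio_orderOf (x := g) (hlt i hi) (hlt j hj) heq
    exact Nat.eq_of_mul_eq_mul_right (by omega) this
  · intro u hu
    simp only [Finset.mem_image, Finset.mem_range] at hu
    obtain ⟨j, hj, rfl⟩ := hu
    have hkey : ((g ^ m' * g ^ (j * (t - 1))) ^ (t + 1) : Fˣ) = cu := by
      rw [mul_pow, ← pow_mul, ← pow_mul, ← hm]
      have h1 : m' * (t + 1) = (t + 1) * m' := by ring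
      have h2 : j * (t - 1) * (t + 1) = (t ^ 2 - 1) * j := by
        rw [mul_assoc, mul_comm (t - 1) (t + 1), hfact]; ring
      rw [h1, h2, pow_mul g (t ^ 2 - 1) j, hgone, one_pow, mul_one]
    calc ((g ^ m' * g ^ (j * (t - 1)) : Fˣ) : F) ^ (t + 1)
        = (((g ^ m' * g ^ (j * (t - 1))) ^ (t + 1) : Fˣ) : F) := by push_cast; ring
      _ = c := by rw [hkey, hcu, Units.val_mk0]

lemma exists_trace_ne (ht : IsPrimePow t) (hF : Fintype.card F = t ^ 2) :
    ∃ x : F, x + x ^ t ≠ 0 := by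
  have h2 : 2 ≤ t := ht.two_le
  by_contra hcon
  push_neg at hcon
  set p : Polynomial F := Polynomial.X + Polynomial.X ^ t with hp
  have hdeg : p.natDegree ≤ t := by
    refine le_trans (Polynomial.natDegree_add_le _ _) ?_
    simp [Polynomial.natDegree_X_pow, Polynomial.natDegree_X]
    omega
  have hp0 : p = 0 := by
    refine Polynomial.eq_zero_of_natDegree_lt_card_of_eval_eq_zero p
      (Function.injective_id) (fun x => ?_) ?_
    · simp [hp, hcon x]
    · refine lt_of_le_of_lt hdeg ?_
      rw [hF]
      nlinarith
  have hc1 : p.coeff 1 = 1 := by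
    rw [hp]
    rw [Polynomial.coeff_add, Polynomial.coeff_X_one, Polynomial.coeff_X_pow, if_neg (by omega), add_zero]
  rw [hp0] at hc1
  simp at hc1

lemma exists_w (ht : IsPrimePow t) (hF : Fintype.card F = t ^ 2)
    (hadd : ∀ x y : F, (x + y) ^ t = x ^ t + y ^ t)
    (v : Fin 4 → F) (hα : ∑ i : Fin 4, v i ^ (t + 1) ≠ 0) :
    ∃ w : Fin 4 → F,
      (∑ i : Fin 4, w i * v i ^ t) ^ (t + 1) ≠
        (∑ i : Fin 4, w i ^ (t + 1)) * (∑ i : Fin 4, v i ^ (t + 1)) := by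
  by_contra hcon
  push_neg at hcon
  set α := ∑ i : Fin 4, v i ^ (t + 1) with hαdef
  have ht1 : t + 1 ≠ 0 := by omega
  have hq : ∀ x : F, (x ^ t) ^ t = x := pow_t_t hF
  have h0 : ∀ x : F, (x ^ t) ^ (t + 1) = x ^ (t + 1) := by
    intro x
    rw [pow_succ, hq, ← pow_succ']
  -- first basis vector
  have h00 : v 0 ^ (t + 1) = α := by
    have h := hcon ![1, 0, 0, 0]
    simpa [Fin.sum_univ_four, zero_pow ht1, h0] using h
  have h11 : v 1 ^ (t + 1) = α := by
    have h := hcon ![0, 1, 0, 0]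
    simpa [Fin.sum_univ_four, zero_pow ht1, h0] using h
  have hv0 : v 0 ≠ 0 := fun h => hα (by rw [← h00, h, zero_pow ht1])
  have hv1 : v 1 ≠ 0 := fun h => hα (by rw [← h11, h, zero_pow ht1])
  set b : F := v 0 * v 1 ^ t with hbdef
  have hb : b ≠ 0 := mul_ne_zero hv0 (pow_ne_zero _ hv1)
  have hstep : ∀ x : F, x + x ^ t = 0 := by
    intro x
    set c : F := x / b with hcdef
    have h := hcon ![1, c, 0, 0]
    simp only [Fin.sum_univ_four, Matrix.cons_val_zero, Matrix.cons_val_one, Matrix.head_cons,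
      Matrix.cons_val_two, Matrix.tail_cons, Matrix.cons_val_three,
      one_mul, zero_mul, add_zero, one_pow, zero_pow ht1] at h
    -- h : (v 0 ^ t + c * v 1 ^ t) ^ (t + 1) = (1 + c ^ (t + 1)) * α
    have hfr : (v 0 ^ t + c * v 1 ^ t) ^ (t + 1)
        = (v 0 + c ^ t * v 1) * (v 0 ^ t + c * v 1 ^ t) := by
      rw [pow_succ]
      congr 1
      rw [hadd, hq, mul_pow, hq]
    rw [hfr] at h
    have h00' : v 0 ^ t * v 0 = α := by rw [← pow_succ, h00]
    have h11' : v 1 ^ t * v 1 = α := by rw [← pow_succ, h11]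
    have hcp : c ^ (t + 1) = c ^ t * c := pow_succ c t
    have hxb : c * b = x := by
      rw [hcdef]
      field_simp
    have hxt : x ^ t = c ^ t * (v 0 ^ t * v 1) := by
      rw [← hxb, hbdef, mul_pow, mul_pow, hq]
    rw [hxt, ← hxb]
    linear_combination h - h00' - (c ^ t * c) * h11'
  obtain ⟨x, hx⟩ := exists_trace_ne ht hF
  exact hx (hstep x)

lemma coeff_prod_top {ι : Type*} (s : Finset ι) (p : ι → Polynomial F) (n : ι → ℕ)
    (hp : ∀ i ∈ s, (p i).natDegree ≤ n i) :
    (∏ i ∈ s, p i).coeff (∑ i ∈ s, n i) = ∏ i ∈ s, (p i).coeff (n i) := by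
  classical
  induction s using Finset.induction_on with
  | empty => simp
  | insert a s' ha ih =>
    rw [Finset.prod_insert ha, Finset.sum_insert ha, Finset.prod_insert ha,
      Polynomial.coeff_mul_add_eq_of_natDegree_le (hp a (Finset.mem_insert_self a s'))
        (le_trans (Polynomial.natDegree_prod_le _ _) (Finset.sum_le_sum
          (fun i hi => hp i (Finset.mem_insert_of_mem hi)))),
      ih (fun i hi => hp i (Finset.mem_insert_of_mem hi))]

lemma coeff_one_lin (a b : F) : (Polynomial.C a * Polynomial.X + Polynomial.C b).coeff 1 = a := by
  simp [Polynomial.coeff_C]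

lemma natDegree_lin_pow (a b : F) (n : ℕ) :
    ((Polynomial.C a * Polynomial.X + Polynomial.C b) ^ n).natDegree ≤ n :=
  calc ((Polynomial.C a * Polynomial.X + Polynomial.C b) ^ n).natDegree
      ≤ n * (Polynomial.C a * Polynomial.X + Polynomial.C b).natDegree :=
        Polynomial.natDegree_pow_le
    _ ≤ n * 1 := Nat.mul_le_mul_left _ Polynomial.natDegree_linear_le
    _ = n := mul_one n

lemma coeff_top_lin_pow (a b : F) (n : ℕ) :
    ((Polynomial.C a * Polynomial.X + Polynomial.C b) ^ n).coeff n = a ^ n := by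
  have h := Polynomial.coeff_pow_of_natDegree_le
    (p := Polynomial.C a * Polynomial.X + Polynomial.C b) (n := 1) (m := n)
    Polynomial.natDegree_linear_le
  rw [mul_one] at h
  rw [h, coeff_one_lin]

section LinePoly

variable (v w : Fin 4 → F) (f : MvPolynomial (Fin 4) F)

/-- The restriction of `f` to the parametrized line `a ↦ a • v + w`. -/
noncomputable def linePoly : Polynomial F :=
  MvPolynomial.eval₂ Polynomial.C (fun i => Polynomial.C (v i) * Polynomial.X + Polynomial.C (w i)) f

lemma linePoly_eval (a : F) :
    (linePoly v w f).eval a = MvPolynomial.eval (fun i => v i * a + w i) f := by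
  induction f using MvPolynomial.induction_on with
  | C c => simp [linePoly]
  | add p q hp hq =>
    rw [linePoly] at hp hq ⊢
    simp [MvPolynomial.eval₂_add, hp, hq]
  | mul_X p i hp =>
    rw [linePoly] at hp ⊢
    rw [MvPolynomial.eval₂_mul, MvPolynomial.eval₂_X, Polynomial.eval_mul, hp,
      MvPolynomial.eval_mul, MvPolynomial.eval_X]
    simp

variable {h : ℕ} {f}

lemma support_degree_sum (hf : f.IsHomogeneous h) {d : Fin 4 →₀ ℕ} (hd : d ∈ f.support) :
    ∑ i ∈ d.support, d i = h := by
  have hw := hf (MvPolynomial.mem_support_iff.mp hd)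
  rw [← hw, Finsupp.weight_apply]
  simp_rw [Finsupp.sum, smul_eq_mul, Pi.one_apply, mul_one]

lemma linePoly_natDegree (hf : f.IsHomogeneous h) : (linePoly v w f).natDegree ≤ h := by
  rw [linePoly, MvPolynomial.eval₂_eq]
  refine Polynomial.natDegree_sum_le_of_forall_le _ _ (fun d hd => ?_)
  refine le_trans (Polynomial.natDegree_C_mul_le _ _) ?_
  refine le_trans (Polynomial.natDegree_prod_le _ _) ?_
  rw [← support_degree_sum hf hd]
  refine Finset.sum_le_sum (fun i _ => ?_)
  exact natDegree_lin_pow _ _ _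

lemma linePoly_coeff_top (hf : f.IsHomogeneous h) :
    (linePoly v w f).coeff h = MvPolynomial.eval v f := by
  rw [linePoly, MvPolynomial.eval₂_eq, Polynomial.finset_sum_coeff, MvPolynomial.eval_eq]
  refine Finset.sum_congr rfl (fun d hd => ?_)
  rw [Polynomial.coeff_C_mul]
  congr 1
  rw [← support_degree_sum hf hd,
    coeff_prod_top _ _ _ (fun i _ => natDegree_lin_pow _ _ _)]
  exact Finset.prod_congr rfl (fun i _ => coeff_top_lin_pow _ _ _)

end LinePoly

lemma eval_smul {h : ℕ} {f : MvPolynomial (Fin 4) F} (hf : f.IsHomogeneous h)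
    (c : F) (x : Fin 4 → F) :
    MvPolynomial.eval (c • x) f = c ^ h * MvPolynomial.eval x f := by
  rw [MvPolynomial.eval_eq, MvPolynomial.eval_eq, Finset.mul_sum]
  refine Finset.sum_congr rfl fun d hd => ?_
  have hdeg := support_degree_sum hf hd
  have hprod : ∏ i ∈ d.support, (c • x) i ^ d i
      = ∏ i ∈ d.support, (c ^ d i * x i ^ d i) :=
    Finset.prod_congr rfl fun i _ => by simp [mul_pow]
  rw [hprod, Finset.prod_mul_distrib, Finset.prod_pow_eq_pow_sum, hdeg]
  ring

lemma eval_eq_zero_everywhere {h : ℕ} (ht : IsPrimePow t) (hF : Fintype.card F = t ^ 2)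
    (hh : h ≤ t) {f : MvPolynomial (Fin 4) F} (hf : f.IsHomogeneous h)
    (hzero : ∀ w : Fin 4 → F, w ≠ 0 → ∑ i : Fin 4, w i ^ (t + 1) = 0 →
      MvPolynomial.eval w f = 0) :
    ∀ v : Fin 4 → F, MvPolynomial.eval v f = 0 := by
  classical
  obtain ⟨φ, hφ⟩ := exists_frob ht hF
  have hadd : ∀ x y : F, (x + y) ^ t = x ^ t + y ^ t := fun x y => by
    rw [← hφ, ← hφ, ← hφ, map_add]
  have hq : ∀ x : F, (x ^ t) ^ t = x := pow_t_t hF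
  have h2 : 2 ≤ t := ht.two_le
  have ht1 : t + 1 ≠ 0 := by omega
  have hswap : ∀ x : F, (x ^ (t + 1)) ^ t = x ^ (t + 1) := by
    intro x
    rw [pow_succ x t, mul_pow, hq]
    exact mul_comm _ _
  have hswap2 : ∀ x : F, (x ^ t) ^ (t + 1) = x ^ (t + 1) := by
    intro x
    rw [pow_succ, hq, ← pow_succ']
  -- a point on the cone
  have hm1 : (-1 : F) ≠ 0 := neg_ne_zero.mpr one_ne_zero
  have hm1t : (-1 : F) ^ t = -1 := by rw [← hφ, map_neg, map_one]
  obtain ⟨S0, hS0card, hS0⟩ := exists_roots ht hF hm1 hm1t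
  obtain ⟨u0, hu0⟩ : S0.Nonempty := Finset.card_pos.mp (by omega)
  set w0 : Fin 4 → F := ![u0, 1, 0, 0] with hw0
  have hw0ne : w0 ≠ 0 := by
    intro hcon
    have := congrFun hcon 1
    simp [hw0] at this
  have hw0cone : ∑ i : Fin 4, w0 i ^ (t + 1) = 0 := by
    simp [hw0, Fin.sum_univ_four, zero_pow ht1, hS0 u0 hu0]
  intro v
  rcases Nat.eq_zero_or_pos h with h0 | hpos
  · -- degree 0 : f is constant
    subst h0
    have e1 := eval_smul hf (0 : F) v
    have e2 := eval_smul hf (0 : F) w0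
    rw [zero_smul, pow_zero, one_mul] at e1 e2
    rw [← e1, e2, hzero w0 hw0ne hw0cone]
  by_cases hvz : v = 0
  · subst hvz
    have e1 := eval_smul hf (0 : F) 0
    rw [zero_smul, zero_pow hpos.ne'] at e1
    rw [e1, zero_mul]
  by_cases hcone : ∑ i : Fin 4, v i ^ (t + 1) = 0
  · exact hzero v hvz hcone
  set α : F := ∑ i : Fin 4, v i ^ (t + 1) with hα
  obtain ⟨w, hw⟩ := exists_w ht hF hadd v hcone
  set β : F := ∑ i : Fin 4, w i * v i ^ t with hβ
  set γ : F := ∑ i : Fin 4, w i ^ (t + 1) with hγ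
  have hαne : α ≠ 0 := hcone
  have hαt : α ^ t = α := by
    rw [← hφ, hα, map_sum]
    exact Finset.sum_congr rfl fun i _ => by rw [hφ, hswap]
  have hγt : γ ^ t = γ := by
    rw [← hφ, hγ, map_sum]
    exact Finset.sum_congr rfl fun i _ => by rw [hφ, hswap]
  have hβB : β ^ t = ∑ i : Fin 4, w i ^ t * v i := by
    rw [← hφ, hβ, map_sum]
    exact Finset.sum_congr rfl fun i _ => by rw [map_mul, hφ, hφ, hq]
  set c : F := (β ^ (t + 1) - γ * α) / α ^ 2 with hc
  have hcne : c ≠ 0 := div_ne_zero (sub_ne_zero.mpr hw) (pow_ne_zero _ hαne)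
  have hct : c ^ t = c := by
    rw [← hφ, hc, map_div₀, map_sub, map_mul, map_pow, map_pow, hφ, hφ, hφ, hswap2 β, hγt, hαt]
  obtain ⟨S, hScard, hSroot⟩ := exists_roots ht hF hcne hct
  -- expansion of the Hermitian form along the line
  have hsum1 : ∑ i : Fin 4, v i ^ t * v i = α := by
    rw [hα]; exact Finset.sum_congr rfl fun i _ => (pow_succ _ _).symm
  have hsum2 : ∑ i : Fin 4, v i ^ t * w i = β := by
    rw [hβ]; exact Finset.sum_congr rfl fun i _ => mul_comm _ _
  have hsum4 : ∑ i : Fin 4, w i ^ t * w i = γ := by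
    rw [hγ]; exact Finset.sum_congr rfl fun i _ => (pow_succ _ _).symm
  have hexp : ∀ a : F, ∑ i : Fin 4, (v i * a + w i) ^ (t + 1)
      = a ^ t * a * α + a ^ t * β + a * β ^ t + γ := by
    intro a
    have hterm : ∀ i : Fin 4, (v i * a + w i) ^ (t + 1)
        = a ^ t * a * (v i ^ t * v i) + a ^ t * (v i ^ t * w i)
          + a * (w i ^ t * v i) + w i ^ t * w i := by
      intro i
      rw [pow_succ, hadd, mul_pow]
      ring
    rw [Finset.sum_congr rfl fun i _ => hterm i]
    rw [Finset.sum_add_distrib, Finset.sum_add_distrib, Finset.sum_add_distrib,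
      ← Finset.mul_sum, ← Finset.mul_sum, ← Finset.mul_sum, hsum1, hsum2, hsum4, hβB]
  -- the roots
  have hroot : ∀ u ∈ S, ∑ i : Fin 4, (v i * (u - β / α) + w i) ^ (t + 1) = 0 := by
    intro u hu
    have hat : (u - β / α) ^ t = u ^ t - β ^ t / α := by
      rw [← hφ, map_sub, map_div₀, hφ, hφ, hφ, hαt]
    have hu1 : u ^ t * u = c := by rw [← pow_succ]; exact hSroot u hu
    have hc' : c * α ^ 2 = β ^ t * β - γ * α := by
      rw [hc, div_mul_cancel₀ _ (pow_ne_zero _ hαne), pow_succ]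
    set a : F := u - β / α with ha
    have hαa : α * a = α * u - β := by
      rw [ha]
      field_simp
    have hαat : α * a ^ t = α * u ^ t - β ^ t := by
      rw [hat]
      field_simp
    rw [hexp]
    have hbig : α ^ 2 * (a ^ t * a * α + a ^ t * β + a * β ^ t + γ)
        = α * ((α * a ^ t) * (α * a)) + α * ((α * a ^ t) * β) + α * ((α * a) * β ^ t)
          + α ^ 2 * γ := by ring
    have hzero2 : α ^ 2 * (a ^ t * a * α + a ^ t * β + a * β ^ t + γ) = 0 := by
      rw [hbig, hαa, hαat]
      linear_combination α ^ 3 * hu1 + α * hc'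
    rcases mul_eq_zero.mp hzero2 with hbad | hgood
    · exact absurd hbad (pow_ne_zero 2 hαne)
    · exact hgood
  -- nonvanishing of the line points
  have hnz : ∀ u ∈ S, (fun i => v i * (u - β / α) + w i) ≠ (0 : Fin 4 → F) := by
    intro u hu hcon0
    set a : F := u - β / α with ha
    have hwv : ∀ i, w i = -(v i * a) := fun i =>
      eq_neg_of_add_eq_zero_right (congrFun hcon0 i)
    have hβa : β = -a * α := by
      rw [hβ]
      calc ∑ i : Fin 4, w i * v i ^ t = ∑ i : Fin 4, -a * v i ^ (t + 1) :=
            Finset.sum_congr rfl fun i _ => by rw [hwv i, pow_succ]; ring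
        _ = -a * α := by rw [← Finset.mul_sum, ← hα]
    have hγa : γ = (-a) ^ (t + 1) * α := by
      rw [hγ]
      calc ∑ i : Fin 4, w i ^ (t + 1) = ∑ i : Fin 4, (-a) ^ (t + 1) * v i ^ (t + 1) :=
            Finset.sum_congr rfl fun i _ => by
              rw [hwv i, show -(v i * a) = -a * v i by ring, mul_pow]
        _ = (-a) ^ (t + 1) * α := by rw [← Finset.mul_sum, ← hα]
    apply hw
    rw [hβa, hγa, mul_pow, pow_succ α t, hαt]
    ring
  -- the line polynomial is zero
  set g := linePoly v w f with hg
  have hgzero : g = 0 := by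
    refine Polynomial.eq_zero_of_natDegree_lt_card_of_eval_eq_zero' g
      (S.image (fun u => u - β / α)) ?_ ?_
    · intro x hx
      obtain ⟨u, hu, rfl⟩ := Finset.mem_image.mp hx
      rw [hg, linePoly_eval]
      exact hzero _ (hnz u hu) (hroot u hu)
    · rw [Finset.card_image_of_injective _ (sub_left_injective), hScard]
      exact lt_of_le_of_lt (linePoly_natDegree v w hf) (by omega)
  have hcoeff := linePoly_coeff_top v w hf
  rw [← hg, hgzero, Polynomial.coeff_zero] at hcoeff
  exact hcoeff.symm

lemma f_eq_zero {h : ℕ} (ht : IsPrimePow t) (hF : Fintype.card F = t ^ 2) (hh : h ≤ t)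
    {f : MvPolynomial (Fin 4) F} (hf : f.IsHomogeneous h)
    (hev : ∀ v : Fin 4 → F, MvPolynomial.eval v f = 0) : f = 0 := by
  have h2 : 2 ≤ t := ht.two_le
  refine MvPolynomial.eq_zero_of_eval_eq_zero (σ := Fin 4) (K := F) f hev ?_
  rw [MvPolynomial.mem_restrictDegree]
  intro s hs i
  have hsi : s i ≤ h := by
    by_cases hi : i ∈ s.support
    · calc s i ≤ ∑ j ∈ s.support, s j :=
          Finset.single_le_sum (fun j _ => Nat.zero_le _) hi
        _ = h := support_degree_sum hf hs
    · rw [Finsupp.notMem_support_iff.mp hi]; exact Nat.zero_le _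
  have hsq : t ^ 2 = t * t := sq t
  have h2t : t * 2 ≤ t * t := Nat.mul_le_mul_left t h2
  rw [hF]
  omega

set_option maxHeartbeats 1000000 in
lemma finrank_homog (h : ℕ) :
    Module.finrank F ↥(MvPolynomial.homogeneousSubmodule (Fin 4) F h) = (3 + h).choose h := by
  classical
  rw [MvPolynomial.homogeneousSubmodule_eq_finsupp_supported]
  have e2 : {d : Fin 4 →₀ ℕ // d ∈ {d : Fin 4 →₀ ℕ | Finsupp.degree d = h}} ≃ Sym (Fin 4) h :=
    { toFun := fun d => ⟨Finsupp.toMultiset d.1, by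
        rw [Finsupp.card_toMultiset]; exact d.2⟩
      invFun := fun m => ⟨Multiset.toFinsupp m.1, by
        show Finsupp.degree _ = h
        have : Multiset.card (Finsupp.toMultiset (Multiset.toFinsupp m.1)) = h := by
          rw [Multiset.toFinsupp_toMultiset]; exact m.2
        rw [Finsupp.card_toMultiset] at this
        exact this⟩
      left_inv := fun d => Subtype.ext (Finsupp.toMultiset_toFinsupp d.1)
      right_inv := fun m => Subtype.ext (Multiset.toFinsupp_toMultiset m.1) }
  haveI : Fintype ↥{d : Fin 4 →₀ ℕ | Finsupp.degree d = h} := Fintype.ofEquiv _ e2.symm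
  rw [LinearEquiv.finrank_eq (AddMonoidAlgebra.supportedEquivFinsupp _),
    Module.finrank_finsupp_self, Fintype.card_congr e2, Sym.card_sym_eq_multichoose,
    Nat.multichoose_eq, Fintype.card_fin]
  congr 1
  omega

end HermAux

/-- For `h ≤ t`, the evaluation map sending a homogeneous degree-`h` polynomial in
4 variables over `F_{t²}` to its vector of values at the points of the Hermitian
surface `X` is injective; hence `dim C_h(X) = C(3+h, h)`. -/
theorem eval_injective_and_dim (t : ℕ) (ht : IsPrimePow t)
    (F : Type) [Field F] [Fintype F] (hF : Fintype.card F = t ^ 2)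
    (h : ℕ) (hh : h ≤ t) :
    (∀ f ∈ MvPolynomial.homogeneousSubmodule (Fin 4) F h,
      (∀ x : ↥(hermSurf t F), MvPolynomial.eval (x : ℙ F (Fin 4 → F)).rep f = 0) →
        f = 0) ∧
    Module.finrank F ↥(hermCode t F h) = Nat.choose (3 + h) h := by
  classical
  have hpart1 : ∀ f ∈ MvPolynomial.homogeneousSubmodule (Fin 4) F h,
      (∀ x : ↥(hermSurf t F), MvPolynomial.eval (x : ℙ F (Fin 4 → F)).rep f = 0) →
        f = 0 := by
    intro f hfmem hvan
    have hf : f.IsHomogeneous h := (MvPolynomial.mem_homogeneousSubmodule _ _).mp hfmem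
    have hzero : ∀ w0 : Fin 4 → F, w0 ≠ 0 → ∑ i : Fin 4, w0 i ^ (t + 1) = 0 →
        MvPolynomial.eval w0 f = 0 := by
      intro w0 hne hcone
      obtain ⟨cu, hcu⟩ := Projectivization.exists_smul_eq_mk_rep (K := F) w0 hne
      have hmem : Projectivization.mk F w0 hne ∈ hermSurf t F := by
        show ∑ i : Fin 4, ((Projectivization.mk F w0 hne).rep i) ^ (t + 1) = 0
        rw [← hcu]
        calc ∑ i : Fin 4, ((cu • w0) i) ^ (t + 1)
            = ∑ i : Fin 4, (cu : F) ^ (t + 1) * w0 i ^ (t + 1) :=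
              Finset.sum_congr rfl fun i _ => by
                rw [Units.smul_def, Pi.smul_apply, smul_eq_mul, mul_pow]
          _ = 0 := by rw [← Finset.mul_sum, hcone, mul_zero]
      have hv := hvan ⟨Projectivization.mk F w0 hne, hmem⟩
      rw [show ((⟨Projectivization.mk F w0 hne, hmem⟩ : ↥(hermSurf t F)) : ℙ F (Fin 4 → F))
          = Projectivization.mk F w0 hne from rfl, ← hcu, Units.smul_def,
        HermAux.eval_smul hf] at hv
      rcases mul_eq_zero.mp hv with hbad | hgood
      · exact absurd hbad (pow_ne_zero _ cu.ne_zero)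
      · exact hgood
    exact HermAux.f_eq_zero ht hF hh hf
      (HermAux.eval_eq_zero_everywhere ht hF hh hf hzero)
  refine ⟨hpart1, ?_⟩
  set L := (hermEval t F).comp (MvPolynomial.homogeneousSubmodule (Fin 4) F h).subtype with hL
  have hrange : LinearMap.range L = hermCode t F h := by
    rw [hL, LinearMap.range_comp, Submodule.range_subtype]
    rfl
  have hinj : Function.Injective L := by
    rw [← LinearMap.ker_eq_bot]
    rw [Submodule.eq_bot_iff]
    intro m hm
    have hv : ∀ x : ↥(hermSurf t F), MvPolynomial.eval (x : ℙ F (Fin 4 → F)).rep m.1 = 0 :=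
      fun x => congrFun (LinearMap.mem_ker.mp hm) x
    exact Subtype.ext (hpart1 m.1 m.2 hv)
  rw [← hrange, LinearMap.finrank_range_of_inj hinj, HermAux.finrank_homog]
end
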